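/- arXiv:2302.08557 — 8 statements merged into one kernel-verified Lean document; each statement's English description precedes it below -/
import Mathlib

section
/- For every integer r ≥ 2 and every finite tree T with ℓ leaves, the r-colour discrepancy of the family of all subtrees of T is at least ⌈(r-1)ℓ/r⌉; that is, for every colouring f : E(T) → {1,…,r} there exists a subtree S of T and a colour j ∈ {1,…,r} such that r·|{e ∈ E(S) : f(e) = j}| − |E(S)| ≥ ⌈(r-1)ℓ/r⌉. -/
/-!
Put `w_j(e) = r·[f e = j] - 1`; the imbalance of colour `j` in `S` is `∑_{e ∈ S} w_j(e)`, and
`∑_j w_j(e) = 0` for every edge. Root `T` at a vertex `ρ` that is not a leaf. By induction on the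
number of edges of a forest `G ≤ T`, the component of `ρ` contains subtrees `B_j ∋ ρ` with
`∑_j imb_j(B_j) ≥ (r - 1)·#(leaves other than ρ)`: cut an edge `ρc`, a bridge, and take the
subtrees `B_j` at `ρ` and `B'_j` at `c` given by induction for the two sides; in colour `j`, glue
`B_j`, `ρc` and `B'_j` together exactly when `w_j(ρc) + imb_j(B'_j) ≥ 0`. If `c` is a leaf these
gains sum to `r - 1`; otherwise they add up to at least
`∑_j (w_j(ρc) + imb_j(B'_j)) = ∑_j imb_j(B'_j)`. Some colour then reaches the average
`(r - 1)ℓ / r`. If every vertex is a leaf, `T` is a single edge, of imbalance `r - 1` in its colour.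
-/

namespace SimpleGraph

variable {V : Type*} {T G : SimpleGraph V} {r : ℕ}

section DeleteEdge

variable {ρ c x : V}

lemma Reachable.or_reachable_deleteEdges (h : G.Reachable ρ x) :
    (G.deleteEdges {s(ρ, c)}).Reachable ρ x ∨ (G.deleteEdges {s(ρ, c)}).Reachable c x := by
  set G' := G.deleteEdges {s(ρ, c)}
  obtain ⟨p⟩ := h
  suffices key : ∀ {u v}, G.Walk u v →
      (G'.Reachable ρ u ∨ G'.Reachable c u) → G'.Reachable ρ v ∨ G'.Reachable c v from
    key p (Or.inl .rfl)
  intro u v p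
  induction p with
  | nil => exact id
  | @cons u w v huw _ ih =>
    refine fun hu => ih ?_
    by_cases he : s(u, w) = s(ρ, c)
    · rcases Sym2.eq_iff.mp he with ⟨-, rfl⟩ | ⟨-, rfl⟩
      exacts [Or.inr .rfl, Or.inl .rfl]
    · have huw' : G'.Adj u w := deleteEdges_adj.mpr ⟨huw, he⟩
      exact hu.imp (·.trans huw'.reachable) (·.trans huw'.reachable)

lemma neighborSet_deleteEdges_of_ne (hρ : x ≠ ρ) (hc : x ≠ c) :
    (G.deleteEdges {s(ρ, c)}).neighborSet x = G.neighborSet x := by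
  ext y
  simp only [mem_neighborSet, deleteEdges_adj, Set.mem_singleton_iff, and_iff_left_iff_imp]
  rintro - he
  rcases Sym2.eq_iff.mp he with ⟨rfl, -⟩ | ⟨rfl, -⟩ <;> contradiction

lemma eq_of_reachable_of_forall_not_adj (hρ : ∀ y, ¬ G.Adj ρ y) (h : G.Reachable ρ x) :
    x = ρ := by
  obtain ⟨p⟩ := h
  cases p with
  | nil => rfl
  | cons h _ => exact (hρ _ h).elim

end DeleteEdge

lemma ncard_neighborSet_eq_degree {v : V} [Fintype (G.neighborSet v)] :
    (G.neighborSet v).ncard = G.degree v := by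
  rw [← Nat.card_coe_set_eq, Nat.card_eq_fintype_card, card_neighborSet_eq_degree]

lemma IsTree.card_eq_two_of_forall_degree_eq_one [Fintype V] [DecidableRel G.Adj]
    (hG : G.IsTree) (h : ∀ v, G.degree v = 1) : Fintype.card V = 2 := by
  classical
  have hedges := hG.card_edgeFinset
  have hsum := G.sum_degrees_eq_twice_card_edges
  simp only [h, Finset.sum_const, Finset.card_univ, smul_eq_mul, mul_one] at hsum
  omega

def rootedLeaves (G : SimpleGraph V) (ρ : V) : Set V :=
  {x | G.Reachable ρ x ∧ x ≠ ρ ∧ (G.neighborSet x).ncard = 1}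

-- Degrees are taken in `G`, so that a branch consisting of `c` alone contains one leaf.
def branchLeaves (G : SimpleGraph V) (ρ c : V) : Set V :=
  {x | (G.deleteEdges {s(ρ, c)}).Reachable c x ∧ (G.neighborSet x).ncard = 1}

lemma Connected.rootedLeaves_eq [Fintype V] [DecidableRel G.Adj] (hG : G.Connected) {ρ : V}
    (hρ : G.degree ρ ≠ 1) : rootedLeaves G ρ = {v | G.degree v = 1} := by
  ext x
  simp only [rootedLeaves, ncard_neighborSet_eq_degree, Set.mem_ofPred_eq]
  exact ⟨fun h => h.2.2, fun h => ⟨hG.preconnected ρ x, by rintro rfl; exact hρ h, h⟩⟩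

section Branch

variable {ρ c : V}

lemma rootedLeaves_subset_union_branchLeaves
    (hbr : ¬ (G.deleteEdges {s(ρ, c)}).Reachable ρ c) :
    rootedLeaves G ρ ⊆ rootedLeaves (G.deleteEdges {s(ρ, c)}) ρ ∪ branchLeaves G ρ c := by
  rintro x ⟨hx, hxρ, hleaf⟩
  rcases hx.or_reachable_deleteEdges (c := c) with h | h
  · have hxc : x ≠ c := by rintro rfl; exact hbr h
    exact Or.inl ⟨h, hxρ, by rwa [neighborSet_deleteEdges_of_ne hxρ hxc]⟩
  · exact Or.inr ⟨h, hleaf⟩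

lemma branchLeaves_subset_rootedLeaves (hadj : G.Adj ρ c)
    (hbr : ¬ (G.deleteEdges {s(ρ, c)}).Reachable ρ c) {y : V}
    (hy : (G.deleteEdges {s(ρ, c)}).Adj c y) :
    branchLeaves G ρ c ⊆ rootedLeaves (G.deleteEdges {s(ρ, c)}) c := by
  rintro x ⟨hx, hleaf⟩
  have hxρ : x ≠ ρ := by rintro rfl; exact hbr hx.symm
  have hxc : x ≠ c := by
    rintro rfl
    obtain ⟨z, hz⟩ := Set.ncard_eq_one.mp hleaf
    have hρz : ρ = z := by
      simpa [hz] using (show ρ ∈ G.neighborSet x from hadj.symm)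
    have hyz : y = z := by
      simpa [hz] using (show y ∈ G.neighborSet x from (deleteEdges_adj.mp hy).1)
    exact (deleteEdges_adj.mp hy).2 (by simp [hρz, hyz, Sym2.eq_swap])
  exact ⟨hx, hxc, by rwa [neighborSet_deleteEdges_of_ne hxρ hxc]⟩

lemma branchLeaves_subset_singleton (hc : ∀ y, ¬ (G.deleteEdges {s(ρ, c)}).Adj c y) :
    branchLeaves G ρ c ⊆ {c} :=
  fun _ hx => eq_of_reachable_of_forall_not_adj hc hx.1

end Branch

namespace Subgraph

noncomputable def imbalance (f : Sym2 V → Fin r) (j : Fin r) (S : T.Subgraph) : ℤ :=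
  r * ({e ∈ S.edgeSet | f e = j} : Set (Sym2 V)).ncard - S.edgeSet.ncard

variable {f : Sym2 V → Fin r} {j : Fin r} {ρ c : V}

lemma imbalance_sup [Finite V] {S₁ S₂ : T.Subgraph} (h : Disjoint S₁.edgeSet S₂.edgeSet) :
    imbalance f j (S₁ ⊔ S₂) = imbalance f j S₁ + imbalance f j S₂ := by
  have hj : Disjoint {e ∈ S₁.edgeSet | f e = j} {e ∈ S₂.edgeSet | f e = j} :=
    h.mono (Set.sep_subset _ _) (Set.sep_subset _ _)
  have hsep : {e ∈ S₁.edgeSet ∪ S₂.edgeSet | f e = j} =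
      {e ∈ S₁.edgeSet | f e = j} ∪ {e ∈ S₂.edgeSet | f e = j} := Set.sep_union
  rw [imbalance, imbalance, imbalance, edgeSet_sup, hsep, Set.ncard_union_eq h,
    Set.ncard_union_eq hj]
  push_cast
  ring

lemma imbalance_subgraphOfAdj (h : T.Adj ρ c) :
    imbalance f j (T.subgraphOfAdj h) = r * (if f s(ρ, c) = j then 1 else 0) - 1 := by
  have hsep : {e ∈ (T.subgraphOfAdj h).edgeSet | f e = j} =
      if f s(ρ, c) = j then {s(ρ, c)} else ∅ := by
    ext e
    rw [edgeSet_subgraphOfAdj]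
    split_ifs with hj <;> simp only [Set.mem_singleton_iff] <;> grind
  rw [imbalance, hsep, edgeSet_subgraphOfAdj]
  split_ifs <;> simp

lemma sum_imbalance_subgraphOfAdj (h : T.Adj ρ c) :
    ∑ j, imbalance f j (T.subgraphOfAdj h) = 0 := by
  simp [imbalance_subgraphOfAdj, Finset.sum_sub_distrib]

lemma imbalance_eq_zero_of_verts_subset_singleton {S : T.Subgraph} {v : V}
    (h : S.verts ⊆ {v}) : imbalance f j S = 0 := by
  have : S.edgeSet = ∅ := by
    refine Set.eq_empty_of_forall_notMem (Sym2.ind fun a b hab => ?_)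
    exact hab.ne ((h (S.edge_vert hab)).trans (h (S.edge_vert hab.symm)).symm)
  simp [imbalance, this]

structure IsRootedIn (S : T.Subgraph) (G : SimpleGraph V) (ρ : V) : Prop where
  connected : S.Connected
  root_mem : ρ ∈ S.verts
  reachable : ∀ x ∈ S.verts, G.Reachable ρ x

variable {G' : SimpleGraph V} {S S' : T.Subgraph}

lemma isRootedIn_singletonSubgraph : (T.singletonSubgraph ρ).IsRootedIn G ρ where
  connected := singletonSubgraph_connected
  root_mem := rfl
  reachable := fun _ hx => hx ▸ Reachable.rfl

lemma IsRootedIn.mono (h : S.IsRootedIn G ρ) (hG : G ≤ G') : S.IsRootedIn G' ρ :=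
  ⟨h.connected, h.root_mem, fun x hx => (h.reachable x hx).mono hG⟩

lemma IsRootedIn.sup_subgraphOfAdj_sup (h : S.IsRootedIn G ρ) (h' : S'.IsRootedIn G c)
    (hT : T.Adj ρ c) (hG : G.Adj ρ c) : (S ⊔ T.subgraphOfAdj hT ⊔ S').IsRootedIn G ρ where
  connected := by
    refine connected_sup (connected_sup h.connected.preconnected
      (subgraphOfAdj_connected hT).preconnected ⟨ρ, h.root_mem, by simp⟩).preconnected
      h'.connected.preconnected ⟨c, Or.inr (by simp), h'.root_mem⟩
  root_mem := Or.inl (Or.inl h.root_mem)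
  reachable := by
    rintro x ((hx | hx) | hx)
    · exact h.reachable x hx
    · rcases hx with rfl | rfl
      exacts [Reachable.rfl, hG.reachable]
    · exact hG.reachable.trans (h'.reachable x hx)

lemma exists_isRootedIn_imbalance_eq [Finite V] (hGT : G ≤ T) (hadj : G.Adj ρ c)
    (hbr : ¬ (G.deleteEdges {s(ρ, c)}).Reachable ρ c)
    (hS : S.IsRootedIn (G.deleteEdges {s(ρ, c)}) ρ)
    (hS' : S'.IsRootedIn (G.deleteEdges {s(ρ, c)}) c) :
    ∃ D : T.Subgraph, D.IsRootedIn G ρ ∧ imbalance f j D =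
      imbalance f j S + max 0 (imbalance f j (T.subgraphOfAdj (hGT hadj)) + imbalance f j S') := by
  by_cases hgain : 0 ≤ imbalance f j (T.subgraphOfAdj (hGT hadj)) + imbalance f j S'
  · refine ⟨S ⊔ T.subgraphOfAdj (hGT hadj) ⊔ S',
      (hS.mono (G.deleteEdges_le _)).sup_subgraphOfAdj_sup (hS'.mono (G.deleteEdges_le _)) _ hadj,
      ?_⟩
    have hc : c ∉ S.verts := fun hc => hbr (hS.reachable c hc)
    have hρ : ρ ∉ S'.verts := fun hρ => hbr (hS'.reachable ρ hρ).symm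
    have hdisj : Disjoint S.verts S'.verts := Set.disjoint_left.mpr fun x hx hx' =>
      hbr ((hS.reachable x hx).trans (hS'.reachable x hx').symm)
    rw [imbalance_sup, imbalance_sup, max_eq_right hgain, add_assoc]
    · rw [edgeSet_subgraphOfAdj, Set.disjoint_singleton_right]
      exact fun he => hc (S.mem_verts_of_mem_edge he (Sym2.mem_mk_right ρ c))
    · rw [edgeSet_sup, edgeSet_subgraphOfAdj, Set.disjoint_union_left,
        Set.disjoint_singleton_left]
      exact ⟨(disjoint_verts_iff_disjoint.mp hdisj).edgeSet,
        fun he => hρ (S'.mem_verts_of_mem_edge he (Sym2.mem_mk_left ρ c))⟩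
  · exact ⟨S, hS.mono (G.deleteEdges_le _), by rw [max_eq_left (le_of_not_ge hgain), add_zero]⟩

lemma ncard_branchLeaves_le_sum_max [Finite V] (hGT : G ≤ T) (hadj : G.Adj ρ c)
    (hbr : ¬ (G.deleteEdges {s(ρ, c)}).Reachable ρ c) {B : Fin r → T.Subgraph}
    (hB : ∀ j, (B j).IsRootedIn (G.deleteEdges {s(ρ, c)}) c)
    (hsum : ((r : ℤ) - 1) * (rootedLeaves (G.deleteEdges {s(ρ, c)}) c).ncard ≤
      ∑ j, imbalance f j (B j)) :
    ((r : ℤ) - 1) * (branchLeaves G ρ c).ncard ≤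
      ∑ j, max 0 (imbalance f j (T.subgraphOfAdj (hGT hadj)) + imbalance f j (B j)) := by
  have hr : (0 : ℤ) ≤ r - 1 := by
    have := (f s(ρ, c)).pos
    omega
  by_cases hc : ∃ y, (G.deleteEdges {s(ρ, c)}).Adj c y
  · obtain ⟨y, hy⟩ := hc
    calc ((r : ℤ) - 1) * (branchLeaves G ρ c).ncard
        ≤ ((r : ℤ) - 1) * (rootedLeaves (G.deleteEdges {s(ρ, c)}) c).ncard :=
          mul_le_mul_of_nonneg_left
            (mod_cast Set.ncard_le_ncard (branchLeaves_subset_rootedLeaves hadj hbr hy)) hr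
      _ ≤ ∑ j, imbalance f j (B j) := hsum
      _ = ∑ j, (imbalance f j (T.subgraphOfAdj (hGT hadj)) + imbalance f j (B j)) := by
          rw [Finset.sum_add_distrib, sum_imbalance_subgraphOfAdj, zero_add]
      _ ≤ _ := Finset.sum_le_sum fun _ _ => le_max_right _ _
  · push Not at hc
    have hB0 : ∀ j, imbalance f j (B j) = 0 := fun j =>
      imbalance_eq_zero_of_verts_subset_singleton fun x hx =>
        eq_of_reachable_of_forall_not_adj hc ((hB j).reachable x hx)
    calc ((r : ℤ) - 1) * (branchLeaves G ρ c).ncard ≤ ((r : ℤ) - 1) * 1 := by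
          gcongr
          simpa using Set.ncard_le_ncard (branchLeaves_subset_singleton hc)
      _ = max 0 (imbalance f (f s(ρ, c)) (T.subgraphOfAdj (hGT hadj)) +
            imbalance f (f s(ρ, c)) (B (f s(ρ, c)))) := by
          rw [imbalance_subgraphOfAdj, hB0, if_pos rfl, max_eq_right] <;> omega
      _ ≤ _ := Finset.single_le_sum (fun j _ => le_max_left 0
            (imbalance f j (T.subgraphOfAdj (hGT hadj)) + imbalance f j (B j))) (Finset.mem_univ _)

theorem exists_isRootedIn_sum_imbalance_ge [Finite V] (hT : T.IsAcyclic) (hGT : G ≤ T)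
    (ρ : V) :
    ∃ B : Fin r → T.Subgraph, (∀ j, (B j).IsRootedIn G ρ) ∧
      ((r : ℤ) - 1) * (rootedLeaves G ρ).ncard ≤ ∑ j, imbalance f j (B j) := by
  induction hn : G.edgeSet.ncard using Nat.strong_induction_on generalizing G ρ with
  | _ n ih =>
  by_cases hρ : ∃ c, G.Adj ρ c
  · obtain ⟨c, hadj⟩ := hρ
    set G' := G.deleteEdges {s(ρ, c)}
    have hG'T : G' ≤ T := (G.deleteEdges_le _).trans hGT
    have hlt : G'.edgeSet.ncard < n := by
      rw [← hn, edgeSet_deleteEdges]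
      exact Set.ncard_sdiff_singleton_lt_of_mem hadj
    have hbr : ¬ G'.Reachable ρ c :=
      isBridge_iff.mp (isAcyclic_iff_forall_adj_isBridge.mp (hT.anti hGT) hadj)
    obtain ⟨B, hB, hsum⟩ := ih _ hlt hG'T ρ rfl
    obtain ⟨B', hB', hsum'⟩ := ih _ hlt hG'T c rfl
    choose D hD hDimb using fun j =>
      exists_isRootedIn_imbalance_eq (f := f) (j := j) hGT hadj hbr (hB j) (hB' j)
    refine ⟨D, hD, ?_⟩
    have hr : (0 : ℤ) ≤ r - 1 := by
      have := (f s(ρ, c)).pos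
      omega
    calc ((r : ℤ) - 1) * (rootedLeaves G ρ).ncard
        ≤ ((r : ℤ) - 1) * ((rootedLeaves G' ρ).ncard + (branchLeaves G ρ c).ncard) := by
          gcongr
          exact_mod_cast (Set.ncard_le_ncard (rootedLeaves_subset_union_branchLeaves hbr)).trans
            (Set.ncard_union_le _ _)
      _ ≤ ∑ j, imbalance f j (B j) +
          ∑ j, max 0 (imbalance f j (T.subgraphOfAdj (hGT hadj)) + imbalance f j (B' j)) := by
          rw [mul_add]
          exact add_le_add hsum (ncard_branchLeaves_le_sum_max hGT hadj hbr hB' hsum')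
      _ = ∑ j, imbalance f j (D j) := by
          rw [← Finset.sum_add_distrib]
          exact Finset.sum_congr rfl fun j _ => (hDimb j).symm
  · push Not at hρ
    refine ⟨fun _ => T.singletonSubgraph ρ, fun _ => isRootedIn_singletonSubgraph, ?_⟩
    have hleaves : rootedLeaves G ρ = ∅ := Set.eq_empty_of_forall_notMem fun x hx =>
      hx.2.1 (eq_of_reachable_of_forall_not_adj hρ hx.1)
    simp [hleaves, imbalance_eq_zero_of_verts_subset_singleton]

end Subgraph

end SimpleGraph

lemma Int.ceil_div_le_of_le_mul {a z : ℤ} {r : ℕ} (hr : 0 < r) (h : a ≤ r * z) :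
    ⌈(a : ℚ) / r⌉ ≤ z :=
  Int.ceil_le.mpr ((div_le_iff₀ (by exact_mod_cast hr)).mpr (by exact_mod_cast (by linarith)))

open SimpleGraph Subgraph

/-- **Multicolour discrepancy of subtrees, lower bound.**
For every `r ≥ 2` and every finite tree `T` with `ℓ` leaves, every `r`-colouring of the
edges of `T` admits a subtree `S` (a connected subgraph) and a colour `j` whose imbalance
`r·|{e ∈ E(S) : f e = j}| − |E(S)|` is at least `⌈(r-1)ℓ/r⌉`. -/
theorem multicolour_discrepancy_lower_bound
    {V : Type*} [Fintype V] (T : SimpleGraph V) [DecidableRel T.Adj]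
    (hT : T.IsTree) (r : ℕ) (hr : 2 ≤ r) (ℓ : ℕ)
    (hℓ : ℓ = ({v : V | T.degree v = 1} : Set V).ncard)
    (f : Sym2 V → Fin r) :
    ∃ S : T.Subgraph, S.Connected ∧ ∃ j : Fin r,
      (⌈(((r : ℚ) - 1) * ℓ) / r⌉ : ℤ) ≤
        (r : ℤ) * ({e ∈ S.edgeSet | f e = j} : Set (Sym2 V)).ncard
          - (S.edgeSet.ncard : ℤ) := by
  have hceil (z : ℤ) (h : ((r : ℤ) - 1) * ℓ ≤ r * z) : ⌈(((r : ℚ) - 1) * ℓ) / r⌉ ≤ z := by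
    exact_mod_cast Int.ceil_div_le_of_le_mul (by omega) h
  by_cases hρ : ∃ ρ, T.degree ρ ≠ 1
  · obtain ⟨ρ, hρ⟩ := hρ
    obtain ⟨B, hB, hsum⟩ := exists_isRootedIn_sum_imbalance_ge (f := f) hT.isAcyclic le_rfl ρ
    rw [hT.connected.rootedLeaves_eq hρ, ← hℓ] at hsum
    have : NeZero r := ⟨by omega⟩
    obtain ⟨j, -, hj⟩ := Finset.exists_le_of_sum_le Finset.univ_nonempty
      (f := fun _ => ((r : ℤ) - 1) * ℓ) (g := fun j => r * imbalance f j (B j))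
      (by simpa [← Finset.mul_sum] using mul_le_mul_of_nonneg_left hsum (by positivity))
    exact ⟨B j, (hB j).connected, j, hceil _ hj⟩
  · push Not at hρ
    have hℓ2 : ℓ ≤ 2 := hℓ ▸ (Set.ncard_le_card _).trans_eq
      (Nat.card_eq_fintype_card.trans (hT.card_eq_two_of_forall_degree_eq_one hρ))
    obtain ⟨ρ⟩ := hT.connected.nonempty
    obtain ⟨c, hc⟩ := (T.degree_pos_iff_exists_adj ρ).mp (by simp [hρ])
    refine ⟨T.subgraphOfAdj hc, subgraphOfAdj_connected hc, f s(ρ, c),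
      hceil (imbalance f (f s(ρ, c)) (T.subgraphOfAdj hc)) ?_⟩
    rw [imbalance_subgraphOfAdj, if_pos rfl]
    nlinarith
end

section
/- For every finite tree T with ℓ leaves, the 2-colour discrepancy of the family of all subtrees of T equals ⌈ℓ/2⌉. -/
/-!
Root `T` at a leaf `r`. Every other vertex `u` then owns the edge to its parent, a subtree of `T`
is a vertex set `A` hanging below its top vertex `m`, and its edges are the parent edges of
`A \ {m}`. For a colouring, the largest imbalance of colour `j` over subtrees with top `v` obeys
`M_j(v) = ∑_{c child of v} max 0 (M_j(c) ± 1)`, the sign being that of the edge `cv`.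

Let `λ(v)` be the number of leaves below `v`, so that `λ(r) = ℓ - 1`. Upper bound: working upwards,
choose for every child `c` the colour of `cv` and whether to swap the two colours below `c`, so as
to keep `M_0(v) + M_1(v) ≤ λ(v)` and `M_j(v) ≤ ⌊λ(v)/2⌋ + 1`; a four-case check shows that one of
the four choices always works, and `λ(v) ≤ ℓ - 1` turns the second bound into `⌈ℓ/2⌉`. Lower bound: for every colouring the two signs of an edge cancel,
which gives `λ(v) ≤ ∑_j max 0 (M_j(v) ± 1)`; at the unique child of `r` this yields a subtree of
imbalance at least `⌈ℓ/2⌉`.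
-/

open Finset

theorem Finset.exists_pred_sum_of_step {ι β M : Type*} [DecidableEq ι] [Nonempty β]
    [AddCommMonoid M] (P : M → Prop) (s : Finset ι) (F : ι → β → M) (h0 : P 0)
    (hstep : ∀ i ∈ s, ∀ x, P x → ∃ b, P (x + F i b)) :
    ∃ g : ι → β, P (∑ i ∈ s, F i (g i)) := by
  induction s using Finset.induction_on with
  | empty => exact ⟨Classical.arbitrary _, by simpa using h0⟩
  | @insert i s hi ih =>
    obtain ⟨g, hg⟩ := ih fun k hk => hstep k (mem_insert_of_mem hk)
    obtain ⟨b, hb⟩ := hstep i (mem_insert_self i s) _ hg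
    refine ⟨Function.update g i b, ?_⟩
    rw [sum_insert hi, Function.update_self, add_comm,
      sum_congr rfl fun k hk => by rw [Function.update_of_ne (ne_of_mem_of_not_mem hk hi)]]
    exact hb

theorem ceil_half_le_iff (n : ℕ) (x : ℤ) : ⌈(n : ℚ) / 2⌉ ≤ x ↔ (n : ℤ) ≤ 2 * x := by
  rw [Int.ceil_le, div_le_iff₀ two_pos, mul_comm]
  exact_mod_cast Iff.rfl

theorem le_ceil_half_iff (n : ℕ) (x : ℤ) : x ≤ ⌈(n : ℚ) / 2⌉ ↔ 2 * x ≤ n + 1 := by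
  rw [Int.le_ceil_iff, lt_div_iff₀ two_pos]
  have : ((x : ℚ) - 1) * 2 < n ↔ (x - 1) * 2 < (n : ℤ) := by exact_mod_cast Iff.rfl
  rw [this]
  omega

def colourSign (j i : Fin 2) : ℤ := if i = j then 1 else -1

theorem colourSign_add (j i σ : Fin 2) : colourSign j (i + σ) = colourSign (j + σ) i := by
  revert j i σ
  decide

theorem colourSign_comp_add {α : Type*} (col : α → Fin 2) (j σ : Fin 2) :
    colourSign j ∘ (fun u => col u + σ) = colourSign (j + σ) ∘ col :=
  funext fun u => colourSign_add j (col u) σ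

theorem sum_colourSign (i : Fin 2) : ∑ j, colourSign j i = 0 := by
  rw [Fin.sum_univ_two]
  revert i
  decide

theorem sum_max_zero_colourSign (i : Fin 2) : ∑ j, max 0 (colourSign j i) = 1 := by
  rw [Fin.sum_univ_two]
  revert i
  decide

def IsBalanced (L : ℤ) (a : Fin 2 → ℤ) : Prop :=
  ∑ j, a j ≤ L ∧ ∀ j, 0 ≤ a j ∧ a j ≤ L / 2 + 1

theorem isBalanced_zero : IsBalanced 0 0 := by
  simp [IsBalanced]

theorem IsBalanced.mono {L L' : ℤ} {a : Fin 2 → ℤ} (h : IsBalanced L a) (hL : L ≤ L') :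
    IsBalanced L' a :=
  ⟨h.1.trans hL, fun j => ⟨(h.2 j).1, (h.2 j).2.trans (by omega)⟩⟩

theorem isBalanced_comp_add_iff {L : ℤ} {a : Fin 2 → ℤ} (σ : Fin 2) :
    IsBalanced L (fun j => a (j + σ)) ↔ IsBalanced L a := by
  rw [IsBalanced, IsBalanced,
    show ∑ j, a (j + σ) = ∑ j, a j from Equiv.sum_comp (Equiv.addRight σ) a]
  exact and_congr_right fun _ => ⟨fun h j => by simpa using h (j - σ), fun h j => h (j + σ)⟩

theorem IsBalanced.exists_add {L l : ℤ} {A a : Fin 2 → ℤ} (hA : IsBalanced L A)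
    (ha : IsBalanced l a) (hl : 1 ≤ l) :
    ∃ ε σ : Fin 2, IsBalanced (L + l) (A + fun j => max 0 (a (j + σ) + colourSign j ε)) := by
  have h11 : (1 : Fin 2) + 1 = 0 := rfl
  simp only [IsBalanced, Fin.sum_univ_two, Fin.forall_fin_two, Fin.exists_fin_two, Pi.add_apply,
    colourSign, zero_add, add_zero, h11, Fin.isValue, if_true, Fin.zero_ne_one, one_ne_zero,
    if_false] at *
  omega

namespace SimpleGraph

theorem Subgraph.Connected.ncard_verts_le_ncard_edgeSet_add_one {V : Type*} {G : SimpleGraph V}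
    {S : G.Subgraph} (hS : S.Connected) : S.verts.ncard ≤ S.edgeSet.ncard + 1 := by
  have h := hS.coe.card_vert_le_card_edgeSet_add_one
  rwa [Nat.card_coe_set_eq, Nat.card_coe_set_eq, ← Set.ncard_image_of_injective _
    (Sym2.map.injective Subtype.val_injective), S.image_coe_edgeSet_coe] at h

theorem Subgraph.edgeSet_eq_empty_of_subsingleton {V : Type*} [Subsingleton V]
    {G : SimpleGraph V} (S : G.Subgraph) : S.edgeSet = ∅ :=
  Set.eq_empty_of_forall_notMem fun e he => by
    induction e using Sym2.ind with
    | _ x y => exact (S.adj_sub he).ne (Subsingleton.elim x y)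

noncomputable def imbalance {V : Type*} {G : SimpleGraph V} (f : Sym2 V → Fin 2)
    (S : G.Subgraph) (j : Fin 2) : ℤ :=
  2 * ({e ∈ S.edgeSet | f e = j} : Set (Sym2 V)).ncard - S.edgeSet.ncard

theorem imbalance_eq_sum {V : Type*} {G : SimpleGraph V} {f : Sym2 V → Fin 2} {S : G.Subgraph}
    {E : Finset (Sym2 V)} (h : S.edgeSet = ↑E) (j : Fin 2) :
    imbalance f S j = ∑ e ∈ E, colourSign j (f e) := by
  classical
  have hj : ({e ∈ S.edgeSet | f e = j} : Set (Sym2 V)) = ↑({e ∈ E | f e = j}) := by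
    ext e
    simp [h]
  rw [imbalance, hj, h, Set.ncard_coe_finset, Set.ncard_coe_finset]
  simp only [colourSign, sum_ite, sum_const, nsmul_eq_mul]
  rw [← card_filter_add_card_filter_not (s := E) (p := fun e => f e = j)]
  push_cast
  ring

theorem injOn_mk_parent {V : Type*} {r : V} {parent : V → V} {depth : V → ℕ}
    (h : ∀ v, v ≠ r → depth (parent v) + 1 = depth v) :
    Set.InjOn (fun v => s(v, parent v)) {v | v ≠ r} := by
  intro u hu v hv huv
  rcases Sym2.eq_iff.mp huv with ⟨rfl, -⟩ | ⟨rfl, hvu⟩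
  · rfl
  · have := h _ hu
    have := h _ hv
    rw [hvu] at *
    omega

variable {V : Type*} [Fintype V]

structure Rooting (T : SimpleGraph V) where
  root : V
  parent : V → V
  depth : V → ℕ
  depth_root : depth root = 0
  adj_parent : ∀ v, v ≠ root → T.Adj v (parent v)
  depth_parent : ∀ v, v ≠ root → depth (parent v) + 1 = depth v
  parent_eq_of_adj : ∀ u v, T.Adj u v → (u ≠ root ∧ parent u = v) ∨ (v ≠ root ∧ parent v = u)
  depth_lt_card : ∀ v, depth v < Fintype.card V

theorem IsTree.exists_rooting {T : SimpleGraph V} (hT : T.IsTree) (r : V) :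
    ∃ R : T.Rooting, R.root = r := by
  classical
  have hc := hT.connected
  have hstep : ∀ v, v ≠ r → ∃ u, T.Adj v u ∧ T.dist r u + 1 = T.dist r v := by
    intro v hv
    obtain ⟨p, hp⟩ := (hc v r).exists_walk_length_eq_dist
    cases p with
    | nil => exact absurd rfl hv
    | @cons _ u _ hvu q =>
      refine ⟨u, hvu, ?_⟩
      have h1 : T.dist u r ≤ q.length := T.dist_le q
      rw [Walk.length_cons] at hp
      rw [dist_comm] at h1 hp
      rcases hvu.diff_dist_adj (u := r) with h | h | h <;> omega
  choose! parent hadj hdepth using hstep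
  have hinj := injOn_mk_parent (r := r) hdepth
  -- the `card V - 1` parent edges are distinct, so they are all the edges of the tree
  have himage : (univ.erase r).image (fun v => s(v, parent v)) = T.edgeFinset := by
    refine eq_of_subset_of_card_le (fun e he => ?_) ?_
    · obtain ⟨v, hv, rfl⟩ := mem_image.mp he
      exact mem_edgeFinset.mpr (hadj v (ne_of_mem_erase hv))
    · rw [card_image_of_injOn (fun u hu v hv => hinj (ne_of_mem_erase hu) (ne_of_mem_erase hv)),
        card_erase_of_mem (mem_univ r), card_univ, ← hT.card_edgeFinset, Nat.add_sub_cancel]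
  refine ⟨⟨r, parent, T.dist r, dist_self, hadj, hdepth, fun u v huv => ?_, fun v => ?_⟩, rfl⟩
  · have he : s(u, v) ∈ T.edgeFinset := mem_edgeFinset.mpr huv
    rw [← himage] at he
    obtain ⟨x, hx, hxe⟩ := mem_image.mp he
    rcases Sym2.eq_iff.mp hxe with ⟨rfl, h⟩ | ⟨rfl, h⟩
    exacts [Or.inl ⟨ne_of_mem_erase hx, h⟩, Or.inr ⟨ne_of_mem_erase hx, h⟩]
  · obtain ⟨p, hp, hlen⟩ := hc.exists_path_of_dist r v
    exact hlen ▸ hp.length_lt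

namespace Rooting

variable {T : SimpleGraph V} (R : T.Rooting)

theorem eq_root_of_depth_eq_zero {v : V} (h : R.depth v = 0) : v = R.root := by
  by_contra hv
  have := R.depth_parent v hv
  omega

theorem parent_induction {P : V → Prop} (root : P R.root)
    (parent : ∀ v, v ≠ R.root → P (R.parent v) → P v) (v : V) : P v := by
  induction hn : R.depth v using Nat.strong_induction_on generalizing v with
  | _ n ih =>
    by_cases hv : v = R.root
    · exact hv ▸ root
    · exact parent v hv (ih _ (hn ▸ R.depth_parent v hv ▸ Nat.lt_succ_self _) _ rfl)

inductive IsDescendant : V → V → Prop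
  | refl (v : V) : IsDescendant v v
  | parent {v u : V} : u ≠ R.root → IsDescendant v (R.parent u) → IsDescendant v u

variable {R}

theorem IsDescendant.depth_le {v u : V} (h : R.IsDescendant v u) : R.depth v ≤ R.depth u := by
  induction h with
  | refl => exact le_rfl
  | parent hu _ ih => have := R.depth_parent _ hu; omega

theorem IsDescendant.eq_of_depth_le {v u : V} (h : R.IsDescendant v u)
    (hd : R.depth u ≤ R.depth v) : u = v := by
  cases h with
  | refl => rfl
  | parent hu h => have := h.depth_le; have := R.depth_parent _ hu; omega

theorem IsDescendant.antisymm {v u : V} (h : R.IsDescendant v u) (h' : R.IsDescendant u v) :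
    u = v :=
  h.eq_of_depth_le h'.depth_le

theorem IsDescendant.trans {v u x : V} (h₁ : R.IsDescendant v u) (h₂ : R.IsDescendant u x) :
    R.IsDescendant v x := by
  induction h₂ with
  | refl => exact h₁
  | parent hx _ ih => exact .parent hx ih

theorem IsDescendant.parent_of_ne {v u : V} (h : R.IsDescendant v u) (hne : u ≠ v) :
    u ≠ R.root ∧ R.IsDescendant v (R.parent u) := by
  cases h with
  | refl => exact absurd rfl hne
  | parent hu h => exact ⟨hu, h⟩

theorem IsDescendant.eq_of_depth_eq {c c' u : V} (h : R.IsDescendant c u)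
    (h' : R.IsDescendant c' u) (hd : R.depth c = R.depth c') : c = c' := by
  induction h with
  | refl => exact h'.eq_of_depth_le hd.le
  | parent hu h ih =>
    cases h' with
    | refl => have := h.depth_le; have := R.depth_parent _ hu; omega
    | parent _ h' => exact ih h'

variable (R)

theorem isDescendant_root (u : V) : R.IsDescendant R.root u :=
  R.parent_induction (.refl _) (fun _ hv h => .parent hv h) u

noncomputable instance : DecidableRel R.IsDescendant := Classical.decRel _

def parentEdge (u : V) : Sym2 V := s(u, R.parent u)

theorem parentEdge_injOn : Set.InjOn R.parentEdge {u | u ≠ R.root} :=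
  injOn_mk_parent R.depth_parent

theorem exists_parentEdge_eq_of_adj {A : Finset V} {x y : V} (h : T.Adj x y) (hx : x ∈ A)
    (hy : y ∈ A) : ∃ u ∈ A, u ≠ R.root ∧ R.parent u ∈ A ∧ R.parentEdge u = s(x, y) := by
  rcases R.parent_eq_of_adj x y h with ⟨hxr, rfl⟩ | ⟨hyr, rfl⟩
  exacts [⟨x, hx, hxr, hy, rfl⟩, ⟨y, hy, hyr, hx, Sym2.eq_swap⟩]

theorem exists_colouring_parentEdge (col : V → Fin 2) :
    ∃ f : Sym2 V → Fin 2, ∀ u, u ≠ R.root → f (R.parentEdge u) = col u := by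
  have hinj : Function.Injective fun u : {u // u ≠ R.root} => R.parentEdge u :=
    fun u v h => Subtype.ext (R.parentEdge_injOn u.2 v.2 h)
  exact ⟨Function.extend (fun u : {u // u ≠ R.root} => R.parentEdge u) (fun u => col u) 0,
    fun u hu => hinj.extend_apply (fun u => col u) 0 ⟨u, hu⟩⟩

def IsSubtreeAt (v : V) (A : Finset V) : Prop :=
  v ∈ A ∧ ∀ u ∈ A, R.IsDescendant v u ∧ (u ≠ v → R.parent u ∈ A)

theorem isSubtreeAt_of_depth_le {m : V} {A : Finset V} (hm : m ∈ A)
    (hmin : ∀ u ∈ A, R.depth m ≤ R.depth u) (hclosed : ∀ u ∈ A, u ≠ m → R.parent u ∈ A) :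
    R.IsSubtreeAt m A := by
  refine ⟨hm, fun u hu => ⟨?_, hclosed u hu⟩⟩
  induction u using R.parent_induction with
  | root =>
    have := hmin _ hu
    rw [R.depth_root, Nat.le_zero] at this
    exact R.eq_root_of_depth_eq_zero this ▸ .refl _
  | parent u hur ih =>
    by_cases hum : u = m
    · exact hum ▸ .refl _
    · exact .parent hur (ih (hclosed u hu hum))

variable {R}

theorem IsSubtreeAt.parent_notMem {m : V} {A : Finset V} (hA : R.IsSubtreeAt m A)
    (hm : m ≠ R.root) : R.parent m ∉ A := fun h => by
  have := (hA.2 _ h).1.depth_le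
  have := R.depth_parent m hm
  omega

theorem IsSubtreeAt.mem_of_isDescendant {v c u : V} {A : Finset V} (hA : R.IsSubtreeAt v A)
    (hvc : R.IsDescendant v c) (hcu : R.IsDescendant c u) (hu : u ∈ A) : c ∈ A := by
  induction hcu with
  | refl => exact hu
  | @parent x hx hcx ih =>
    refine ih ((hA.2 x hu).2 fun hxv => ?_)
    subst hxv
    have := (hvc.trans hcx).depth_le
    have := R.depth_parent _ hx
    omega

theorem IsSubtreeAt.connected_induce {m : V} {A : Finset V} (hA : R.IsSubtreeAt m A) :
    ((⊤ : T.Subgraph).induce ↑A).Connected := by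
  set H := (⊤ : T.Subgraph).induce ↑A
  have hreach : ∀ u (hu : u ∈ A), H.coe.Reachable ⟨u, hu⟩ ⟨m, hA.1⟩ := by
    intro u hu
    have hmu := (hA.2 u hu).1
    induction hmu with
    | refl => rfl
    | @parent u hur _ ih =>
      by_cases hum : u = m
      · subst hum
        rfl
      have hp := (hA.2 u hu).2 hum
      have hadj : H.coe.Adj ⟨u, hu⟩ ⟨R.parent u, hp⟩ := by
        simp only [H, Subgraph.coe_adj, Subgraph.induce_adj, Subgraph.top_adj]
        exact ⟨hu, hp, R.adj_parent u hur⟩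
      exact hadj.reachable.trans (ih hp)
  refine Subgraph.connected_iff.mpr ⟨Subgraph.preconnected_iff.mpr fun x y => ?_, m, hA.1⟩
  exact (hreach x x.2).trans (hreach y y.2).symm

variable [DecidableEq V]

theorem IsSubtreeAt.ne_root {m u : V} {A : Finset V} (hA : R.IsSubtreeAt m A)
    (hu : u ∈ A.erase m) : u ≠ R.root :=
  ((hA.2 u (mem_of_mem_erase hu)).1.parent_of_ne (ne_of_mem_erase hu)).1

theorem IsSubtreeAt.edgeSet_induce {m : V} {A : Finset V} (hA : R.IsSubtreeAt m A) :
    ((⊤ : T.Subgraph).induce ↑A).edgeSet = ↑((A.erase m).image R.parentEdge) := by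
  ext e
  induction e using Sym2.ind with
  | _ x y =>
  simp only [Subgraph.mem_edgeSet, Subgraph.induce_adj, Subgraph.top_adj, coe_image,
    Set.mem_image, mem_coe]
  constructor
  · rintro ⟨hx, hy, hxy⟩
    obtain ⟨u, hu, hur, hp, he⟩ := R.exists_parentEdge_eq_of_adj hxy hx hy
    exact ⟨u, mem_erase.mpr ⟨fun hum => hA.parent_notMem (hum ▸ hur) (hum ▸ hp), hu⟩, he⟩
  · rintro ⟨u, hu, he⟩
    have huA := mem_of_mem_erase hu
    have hp := (hA.2 u huA).2 (ne_of_mem_erase hu)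
    have hadj := R.adj_parent u (hA.ne_root hu)
    rcases Sym2.eq_iff.mp he with ⟨rfl, rfl⟩ | ⟨rfl, rfl⟩
    exacts [⟨huA, hp, hadj⟩, ⟨hp, huA, hadj.symm⟩]

theorem imbalance_eq_sum_parentEdge {S : T.Subgraph} {m : V} {A : Finset V}
    (hA : R.IsSubtreeAt m A) (hE : S.edgeSet = ↑((A.erase m).image R.parentEdge))
    (f : Sym2 V → Fin 2) (j : Fin 2) :
    imbalance f S j = ∑ u ∈ A.erase m, colourSign j (f (R.parentEdge u)) := by
  rw [imbalance_eq_sum hE, sum_image fun u hu v hv => R.parentEdge_injOn (hA.ne_root hu)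
    (hA.ne_root hv)]

variable (R)

theorem exists_isSubtreeAt_of_connected {S : T.Subgraph} (hS : S.Connected) :
    ∃ m A, R.IsSubtreeAt m A ∧ S.edgeSet = ↑((A.erase m).image R.parentEdge) := by
  classical
  set A := S.verts.toFinite.toFinset
  obtain ⟨m, hmA, hmin⟩ := A.exists_min_image R.depth (by simpa [A] using hS.nonempty)
  set B := {u ∈ A.erase m | R.parent u ∈ A}
  have hsub : S.edgeSet ⊆ ↑(B.image R.parentEdge) := by
    intro e he
    induction e using Sym2.ind with
    | _ x y =>
    obtain ⟨u, hu, hur, hp, he⟩ := R.exists_parentEdge_eq_of_adj (A := A) (S.adj_sub he)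
      (by simpa [A] using S.edge_vert he) (by simpa [A] using S.edge_vert (S.adj_symm he))
    refine mem_image.mpr ⟨u, mem_filter.mpr ⟨mem_erase.mpr ⟨fun hum => ?_, hu⟩, hp⟩, he⟩
    have := hmin _ hp
    have := R.depth_parent u hur
    subst hum
    omega
  -- `S` has at most `#B` edges but, being connected, at least `#A - 1`; so `B = A.erase m`
  have hcard : (A.erase m).card ≤ S.edgeSet.ncard := by
    have := hS.ncard_verts_le_ncard_edgeSet_add_one
    have hv : S.verts.ncard = A.card := Set.ncard_eq_toFinset_card _ _
    rw [card_erase_of_mem hmA]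
    omega
  have hB : B = A.erase m := by
    refine eq_of_subset_of_card_le (filter_subset _ _) (hcard.trans ?_)
    calc S.edgeSet.ncard ≤ (B.image R.parentEdge : Set (Sym2 V)).ncard := Set.ncard_le_ncard hsub
      _ ≤ B.card := by rw [Set.ncard_coe_finset]; exact card_image_le
  refine ⟨m, A, R.isSubtreeAt_of_depth_le hmA hmin fun u hu hum =>
    (mem_filter.mp (hB ▸ mem_erase.mpr ⟨hum, hu⟩ : u ∈ B)).2, ?_⟩
  rw [← hB]
  refine Set.eq_of_subset_of_ncard_le hsub ?_ (Set.toFinite _)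
  rw [Set.ncard_coe_finset]
  exact card_image_le.trans (hB ▸ hcard)

def children (v : V) : Finset V := {u | u ≠ R.root ∧ R.parent u = v}

variable {R}

@[simp]
theorem mem_children {v c : V} : c ∈ R.children v ↔ c ≠ R.root ∧ R.parent c = v := by
  simp [children]

theorem depth_of_mem_children {v c : V} (h : c ∈ R.children v) : R.depth c = R.depth v + 1 := by
  rw [← (mem_children.mp h).2, R.depth_parent c (mem_children.mp h).1]

theorem isDescendant_of_mem_children {v c : V} (h : c ∈ R.children v) : R.IsDescendant v c :=
  .parent (mem_children.mp h).1 ((mem_children.mp h).2 ▸ .refl _)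

theorem IsDescendant.ne_of_mem_children {v c u : V} (h : R.IsDescendant c u)
    (hc : c ∈ R.children v) : u ≠ v := by
  rintro rfl
  have := h.depth_le
  have := depth_of_mem_children hc
  omega

theorem IsDescendant.eq_or_exists_child {v u : V} (h : R.IsDescendant v u) :
    u = v ∨ ∃ c ∈ R.children v, R.IsDescendant c u := by
  induction h with
  | refl => exact .inl rfl
  | parent hu _ ih =>
    right
    rcases ih with h | ⟨c, hc, hcu⟩
    · exact ⟨_, mem_children.mpr ⟨hu, h⟩, .refl _⟩
    · exact ⟨c, hc, .parent hu hcu⟩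

theorem eq_of_mem_children {v c c' u : V} (hc : c ∈ R.children v) (hc' : c' ∈ R.children v)
    (h : R.IsDescendant c u) (h' : R.IsDescendant c' u) : c = c' :=
  h.eq_of_depth_eq h' (by rw [depth_of_mem_children hc, depth_of_mem_children hc'])

variable (R)

theorem children_induction {P : V → Prop} (h : ∀ v, (∀ c ∈ R.children v, P c) → P v)
    (v : V) : P v := by
  induction hn : Fintype.card V - R.depth v using Nat.strong_induction_on generalizing v with
  | _ n ih =>
    refine h v fun c hc => ih _ ?_ c rfl
    have := R.depth_of_mem_children hc
    have := R.depth_lt_card c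
    omega

theorem exists_eq_of_isDescendant_child {α : Type*} (v : V) (κ : V → V → α) :
    ∃ g : V → α, ∀ c ∈ R.children v, ∀ u, R.IsDescendant c u → g u = κ c u := by
  classical
  refine ⟨fun u => if h : ∃ c ∈ R.children v, R.IsDescendant c u then κ h.choose u else κ v u,
    fun c hc u hu => ?_⟩
  have h : ∃ c ∈ R.children v, R.IsDescendant c u := ⟨c, hc, hu⟩
  simp only [dif_pos h]
  rw [eq_of_mem_children h.choose_spec.1 hc h.choose_spec.2 hu]

theorem degree_eq [DecidableRel T.Adj] (v : V) :
    T.degree v = #(R.children v) + if v = R.root then 0 else 1 := by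
  rw [← card_neighborFinset_eq_degree]
  have hN : T.neighborFinset v =
      R.children v ∪ ({u | v ≠ R.root ∧ u = R.parent v} : Finset V) := by
    ext u
    simp only [mem_neighborFinset, mem_union, mem_children, mem_filter, mem_univ, true_and]
    constructor
    · intro h
      rcases R.parent_eq_of_adj v u h with ⟨hv, rfl⟩ | ⟨hu, rfl⟩
      exacts [.inr ⟨hv, rfl⟩, .inl ⟨hu, rfl⟩]
    · rintro (⟨hu, rfl⟩ | ⟨hv, rfl⟩)
      exacts [(R.adj_parent u hu).symm, R.adj_parent v hv]
  rw [hN, card_union_of_disjoint]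
  · split_ifs with hv
    · simp [hv]
    · rw [show ({u | v ≠ R.root ∧ u = R.parent v} : Finset V) = {R.parent v} by ext; simp [hv],
        card_singleton]
  · refine Finset.disjoint_left.mpr fun u hu hu' => ?_
    obtain ⟨hv, rfl⟩ : v ≠ R.root ∧ u = R.parent v := by simpa using hu'
    have := depth_of_mem_children hu
    have := R.depth_parent v hv
    omega

theorem exists_children_root_eq_singleton [DecidableRel T.Adj] (h : T.degree R.root = 1) :
    ∃ c₀, R.children R.root = {c₀} :=
  card_eq_one.mp (by simpa [R.degree_eq] using h)

noncomputable def leafCount (v : V) : ℕ := #{u | R.IsDescendant v u ∧ R.children u = ∅}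

variable {R}

theorem leafCount_of_children_eq_empty {v : V} (h : R.children v = ∅) : R.leafCount v = 1 := by
  rw [leafCount, card_eq_one]
  refine ⟨v, ext fun u => ?_⟩
  simp only [mem_filter, mem_univ, true_and, mem_singleton]
  refine ⟨fun ⟨hu, _⟩ => ?_, fun hu => by subst hu; exact ⟨.refl _, h⟩⟩
  rcases hu.eq_or_exists_child with hu | ⟨c, hc, -⟩
  exacts [hu, absurd hc (h ▸ notMem_empty c)]

theorem leafCount_eq_sum {v : V} (h : (R.children v).Nonempty) :
    R.leafCount v = ∑ c ∈ R.children v, R.leafCount c := by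
  have hsplit : ({u | R.IsDescendant v u ∧ R.children u = ∅} : Finset V) =
      (R.children v).biUnion fun c => {u | R.IsDescendant c u ∧ R.children u = ∅} := by
    ext u
    simp only [mem_filter, mem_univ, true_and, mem_biUnion]
    refine ⟨fun ⟨hu, hl⟩ => ?_, fun ⟨c, hc, hcu, hl⟩ =>
      ⟨(isDescendant_of_mem_children hc).trans hcu, hl⟩⟩
    rcases hu.eq_or_exists_child with rfl | ⟨c, hc, hcu⟩
    · exact absurd hl h.ne_empty
    · exact ⟨c, hc, hcu, hl⟩
  rw [leafCount, hsplit, card_biUnion]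
  · rfl
  · intro c hc c' hc' hne
    refine Finset.disjoint_left.mpr fun u hu hu' => hne ?_
    exact eq_of_mem_children hc hc' (mem_filter.mp hu).2.1 (mem_filter.mp hu').2.1

theorem IsDescendant.leafCount_le {v u : V} (h : R.IsDescendant v u) :
    R.leafCount u ≤ R.leafCount v :=
  card_le_card fun x hx => by
    simp only [mem_filter, mem_univ, true_and] at hx ⊢
    exact ⟨h.trans hx.1, hx.2⟩

variable (R)

theorem leafCount_pos (v : V) : 0 < R.leafCount v := by
  induction v using R.children_induction with
  | _ v ih =>
    rcases (R.children v).eq_empty_or_nonempty with h | h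
    · rw [leafCount_of_children_eq_empty h]
      exact one_pos
    · rw [leafCount_eq_sum h]
      exact sum_pos ih h

theorem sum_leafCount_children_le (v : V) :
    ∑ c ∈ R.children v, R.leafCount c ≤ R.leafCount v := by
  rcases (R.children v).eq_empty_or_nonempty with h | h
  · simp [h]
  · rw [leafCount_eq_sum h]

theorem ncard_degree_eq_one [DecidableRel T.Adj] (h : T.degree R.root = 1) :
    {v | T.degree v = 1}.ncard = R.leafCount R.root + 1 := by
  obtain ⟨c₀, hc₀⟩ := R.exists_children_root_eq_singleton h
  have hleaves : {v | T.degree v = 1} =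
      insert R.root ↑({u | R.IsDescendant R.root u ∧ R.children u = ∅} : Finset V) := by
    ext v
    by_cases hv : v = R.root
    · simp [hv, h]
    · simp [hv, R.degree_eq, R.isDescendant_root]
  rw [hleaves, Set.ncard_insert_of_notMem (by simp [hc₀]), Set.ncard_coe_finset, leafCount]

variable {R}

theorem IsSubtreeAt.restrict {v c : V} {A : Finset V} (hA : R.IsSubtreeAt v A)
    (hc : c ∈ R.children v) (hcA : c ∈ A) : R.IsSubtreeAt c {u ∈ A | R.IsDescendant c u} := by
  refine ⟨mem_filter.mpr ⟨hcA, .refl c⟩, fun u hu => ⟨(mem_filter.mp hu).2, fun huc => ?_⟩⟩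
  obtain ⟨huA, hcu⟩ := mem_filter.mp hu
  exact mem_filter.mpr ⟨(hA.2 u huA).2 (hcu.ne_of_mem_children hc), (hcu.parent_of_ne huc).2⟩

theorem IsSubtreeAt.sum_erase {v : V} {A : Finset V} (hA : R.IsSubtreeAt v A) (w : V → ℤ) :
    ∑ u ∈ A.erase v, w u =
      ∑ c ∈ R.children v ∩ A, (w c + ∑ u ∈ {u ∈ A | R.IsDescendant c u}.erase c, w u) := by
  have hsplit : A.erase v = (R.children v ∩ A).biUnion fun c => {u ∈ A | R.IsDescendant c u} := by
    ext u
    simp only [mem_erase, mem_biUnion, mem_inter, mem_filter]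
    constructor
    · rintro ⟨huv, huA⟩
      obtain ⟨c, hc, hcu⟩ := ((hA.2 u huA).1.eq_or_exists_child).resolve_left huv
      exact ⟨c, ⟨hc, hA.mem_of_isDescendant (isDescendant_of_mem_children hc) hcu huA⟩, huA, hcu⟩
    · rintro ⟨c, ⟨hc, -⟩, huA, hcu⟩
      exact ⟨hcu.ne_of_mem_children hc, huA⟩
  rw [hsplit, sum_biUnion]
  · refine sum_congr rfl fun c hc => ?_
    rw [add_sum_erase _ _ (mem_filter.mpr ⟨(mem_inter.mp hc).2, .refl c⟩)]
  · intro c hc c' hc' hne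
    refine Finset.disjoint_left.mpr fun u hu hu' => hne ?_
    exact eq_of_mem_children (mem_inter.mp hc).1 (mem_inter.mp hc').1 (mem_filter.mp hu).2
      (mem_filter.mp hu').2

variable (R)

/-- `w u` stands for the weight of the parent edge of `u`; this is the largest total weight of a
subtree with top `v`. -/
def maxWeight (w : V → ℤ) (v : V) : ℤ :=
  ∑ c ∈ (R.children v).attach, max 0 (maxWeight w c + w c)
termination_by Fintype.card V - R.depth v
decreasing_by
  have := depth_of_mem_children c.2
  have := R.depth_lt_card c
  omega

theorem maxWeight_eq (w : V → ℤ) (v : V) :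
    R.maxWeight w v = ∑ c ∈ R.children v, max 0 (R.maxWeight w c + w c) := by
  rw [maxWeight, sum_attach (R.children v) fun c => max 0 (R.maxWeight w c + w c)]

theorem maxWeight_nonneg (w : V → ℤ) (v : V) : 0 ≤ R.maxWeight w v := by
  rw [maxWeight_eq]
  exact sum_nonneg fun _ _ => le_max_left _ _

theorem maxWeight_of_children_eq_empty (w : V → ℤ) {v : V} (h : R.children v = ∅) :
    R.maxWeight w v = 0 := by
  rw [maxWeight_eq, h, sum_empty]

theorem maxWeight_congr {w w' : V → ℤ} {v : V}
    (h : ∀ u, R.IsDescendant v u → u ≠ v → w u = w' u) :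
    R.maxWeight w v = R.maxWeight w' v := by
  induction v using R.children_induction with
  | _ v ih =>
    rw [maxWeight_eq, maxWeight_eq]
    refine sum_congr rfl fun c hc => ?_
    have hvc := isDescendant_of_mem_children hc
    rw [h c hvc ((IsDescendant.refl c).ne_of_mem_children hc),
      ih c hc fun u hu _ => h u (hvc.trans hu) (hu.ne_of_mem_children hc)]

variable {R}

theorem IsSubtreeAt.sum_le_maxWeight (w : V → ℤ) {v : V} {A : Finset V}
    (hA : R.IsSubtreeAt v A) : ∑ u ∈ A.erase v, w u ≤ R.maxWeight w v := by
  induction v using R.children_induction generalizing A with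
  | _ v ih =>
    rw [hA.sum_erase, maxWeight_eq]
    calc ∑ c ∈ R.children v ∩ A, (w c + ∑ u ∈ {u ∈ A | R.IsDescendant c u}.erase c, w u)
        ≤ ∑ c ∈ R.children v ∩ A, max 0 (R.maxWeight w c + w c) := by
          refine sum_le_sum fun c hc => ?_
          obtain ⟨hc, hcA⟩ := mem_inter.mp hc
          have := ih c hc (hA.restrict hc hcA)
          omega
      _ ≤ ∑ c ∈ R.children v, max 0 (R.maxWeight w c + w c) :=
          sum_le_sum_of_subset_of_nonneg inter_subset_left fun _ _ _ => le_max_left _ _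

variable (R)

theorem exists_isSubtreeAt_sum_eq_maxWeight (w : V → ℤ) (v : V) :
    ∃ A, R.IsSubtreeAt v A ∧ ∑ u ∈ A.erase v, w u = R.maxWeight w v := by
  induction v using R.children_induction with
  | _ v ih =>
    choose! B hB hsum using ih
    set good := {c ∈ R.children v | 0 < R.maxWeight w c + w c}
    have hgood : good ⊆ R.children v := filter_subset _ _
    have hdesc : ∀ c ∈ good, ∀ u ∈ B c, R.IsDescendant c u := fun c hc u hu =>
      ((hB c (hgood hc)).2 u hu).1
    have hv : v ∉ good.biUnion B := by
      simp only [mem_biUnion, not_exists, not_and]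
      exact fun c hc hv => (hdesc c hc v hv).ne_of_mem_children (hgood hc) rfl
    refine ⟨insert v (good.biUnion B), ⟨mem_insert_self _ _, fun u hu => ?_⟩, ?_⟩
    · rcases mem_insert.mp hu with rfl | hu
      · exact ⟨.refl u, fun h => absurd rfl h⟩
      obtain ⟨c, hc, hu⟩ := mem_biUnion.mp hu
      refine ⟨(isDescendant_of_mem_children (hgood hc)).trans (hdesc c hc u hu), fun _ => ?_⟩
      by_cases huc : u = c
      · rw [huc, (mem_children.mp (hgood hc)).2]
        exact mem_insert_self _ _
      · exact mem_insert_of_mem (mem_biUnion.mpr ⟨c, hc, ((hB c (hgood hc)).2 u hu).2 huc⟩)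
    · rw [erase_insert hv, sum_biUnion, maxWeight_eq, sum_filter]
      · refine sum_congr rfl fun c hc => ?_
        rw [← add_sum_erase _ _ (hB c hc).1, hsum c hc]
        split_ifs with h <;> omega
      · intro c hc c' hc' hne
        refine Finset.disjoint_left.mpr fun u hu hu' => hne ?_
        exact eq_of_mem_children (hgood hc) (hgood hc') (hdesc c hc u hu) (hdesc c' hc' u hu')

def IsBalancedAt (col : V → Fin 2) (v : V) : Prop :=
  IsBalanced (R.leafCount v) fun j => R.maxWeight (colourSign j ∘ col) v

variable {R}

theorem isBalancedAt_congr {col col' : V → Fin 2} {v : V}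
    (h : ∀ u, R.IsDescendant v u → u ≠ v → col u = col' u) :
    R.IsBalancedAt col v ↔ R.IsBalancedAt col' v := by
  have hw : ∀ j, R.maxWeight (colourSign j ∘ col) v = R.maxWeight (colourSign j ∘ col') v :=
    fun j => R.maxWeight_congr fun u hu huv => by simp only [Function.comp_apply, h u hu huv]
  simp only [IsBalancedAt, hw]

theorem isBalancedAt_add_iff {col : V → Fin 2} {v : V} (σ : Fin 2) :
    R.IsBalancedAt (fun u => col u + σ) v ↔ R.IsBalancedAt col v := by
  simp only [IsBalancedAt, colourSign_comp_add]
  exact isBalanced_comp_add_iff (a := fun j => R.maxWeight (colourSign j ∘ col) v) σ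

variable (R)

theorem exists_forall_isBalancedAt : ∃ col : V → Fin 2, ∀ v, R.IsBalancedAt col v := by
  suffices h : ∀ v, ∃ col : V → Fin 2, ∀ u, R.IsDescendant v u → R.IsBalancedAt col u from
    (h R.root).imp fun col h u => h u (R.isDescendant_root u)
  intro v
  induction v using R.children_induction with
  | _ v ih =>
  choose! κ hκ using ih
  -- what the child `c` contributes when its edge gets colour `b.1` and `b.2` is added to `κ c`
  let F : V → Fin 2 × Fin 2 → ℤ × (Fin 2 → ℤ) := fun c b =>
    (R.leafCount c, fun j => max 0 (R.maxWeight (colourSign (j + b.2) ∘ κ c) c + colourSign j b.1))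
  obtain ⟨g, hg⟩ := Finset.exists_pred_sum_of_step (fun x => IsBalanced x.1 x.2) (R.children v) F
    isBalanced_zero fun c hc x hx => by
      obtain ⟨ε, σ, h⟩ := hx.exists_add (hκ c hc c (.refl c)) (by exact_mod_cast R.leafCount_pos c)
      exact ⟨(ε, σ), h⟩
  obtain ⟨col, hcol⟩ := R.exists_eq_of_isDescendant_child v fun c =>
    Function.update (fun u => κ c u + (g c).2) c (g c).1
  have hbelow : ∀ c ∈ R.children v, ∀ u, R.IsDescendant c u → u ≠ c → col u = κ c u + (g c).2 :=
    fun c hc u hu huc => by rw [hcol c hc u hu, Function.update_of_ne huc]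
  refine ⟨col, fun u hu => ?_⟩
  rcases hu.eq_or_exists_child with rfl | ⟨c, hc, hcu⟩
  · have hsum : (fun j => R.maxWeight (colourSign j ∘ col) u) =
        (∑ c ∈ R.children u, F c (g c)).2 := by
      funext j
      rw [maxWeight_eq, Prod.snd_sum, Finset.sum_apply]
      refine sum_congr rfl fun c hc => ?_
      rw [Function.comp_apply, hcol c hc c (.refl c), Function.update_self,
        R.maxWeight_congr (w' := colourSign j ∘ fun x => κ c x + (g c).2) fun x hx hxc => by
          simp only [Function.comp_apply, hbelow c hc x hx hxc], colourSign_comp_add]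
    unfold IsBalancedAt
    rw [hsum]
    exact hg.mono (by simp only [Prod.fst_sum, F]; exact_mod_cast R.sum_leafCount_children_le u)
  · rw [isBalancedAt_congr (col' := fun x => κ c x + (g c).2) fun x hx hxu =>
      hbelow c hc x (hcu.trans hx) fun hxc => hxu (hx.antisymm (hxc ▸ hcu)), isBalancedAt_add_iff]
    exact hκ c hc u hcu

theorem leafCount_le_sum_max (col : V → Fin 2) (v : V) :
    (R.leafCount v : ℤ) ≤
      ∑ j, max 0 (R.maxWeight (colourSign j ∘ col) v + colourSign j (col v)) := by
  induction v using R.children_induction with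
  | _ v ih =>
  rcases (R.children v).eq_empty_or_nonempty with h | h
  · simp only [leafCount_of_children_eq_empty h, maxWeight_of_children_eq_empty _ _ h, zero_add,
      sum_max_zero_colourSign, Nat.cast_one, le_refl]
  · calc (R.leafCount v : ℤ)
        = ∑ c ∈ R.children v, (R.leafCount c : ℤ) := by rw [leafCount_eq_sum h, Nat.cast_sum]
      _ ≤ ∑ c ∈ R.children v,
            ∑ j, max 0 (R.maxWeight (colourSign j ∘ col) c + colourSign j (col c)) :=
          sum_le_sum fun c hc => ih c hc
      _ = ∑ j, R.maxWeight (colourSign j ∘ col) v := by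
          rw [sum_comm]
          simp only [R.maxWeight_eq _ v, Function.comp_apply]
      _ = ∑ j, (R.maxWeight (colourSign j ∘ col) v + colourSign j (col v)) := by
          rw [sum_add_distrib, sum_colourSign, add_zero]
      _ ≤ _ := sum_le_sum fun j _ => le_max_right _ _

theorem exists_le_two_mul_maxWeight (col : V → Fin 2) {c₀ : V} (h : R.children R.root = {c₀}) :
    ∃ m j, (R.leafCount R.root : ℤ) + 1 ≤ 2 * R.maxWeight (colourSign j ∘ col) m := by
  have hroot : ∀ j, R.maxWeight (colourSign j ∘ col) R.root =
      max 0 (R.maxWeight (colourSign j ∘ col) c₀ + colourSign j (col c₀)) := fun j => by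
    rw [maxWeight_eq, h, sum_singleton, Function.comp_apply]
  have hl := R.leafCount_le_sum_max col c₀
  rw [← sum_singleton R.leafCount c₀, ← h, ← leafCount_eq_sum (h ▸ singleton_nonempty c₀),
    Fin.sum_univ_two] at hl
  have h0 := R.maxWeight_nonneg (colourSign 0 ∘ col) c₀
  have h1 := R.maxWeight_nonneg (colourSign 1 ∘ col) c₀
  have hr0 := hroot 0
  have hr1 := hroot 1
  -- with `i = col c₀`, `M_i(r) = M_i(c₀) + 1` while `M_{i+1}(r) = max 0 (M_{i+1}(c₀) - 1)`
  generalize col c₀ = i at hl hr0 hr1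
  fin_cases i <;> simp only [colourSign] at hl hr0 hr1 <;> norm_num at hl hr0 hr1
  · rcases le_or_gt ((R.leafCount R.root : ℤ) + 1) (2 * R.maxWeight (colourSign 0 ∘ col) R.root)
      with h | h
    exacts [⟨R.root, 0, h⟩, ⟨c₀, 1, by omega⟩]
  · rcases le_or_gt ((R.leafCount R.root : ℤ) + 1) (2 * R.maxWeight (colourSign 1 ∘ col) R.root)
      with h | h
    exacts [⟨R.root, 1, h⟩, ⟨c₀, 0, by omega⟩]

theorem exists_colouring_two_mul_imbalance_le :
    ∃ f : Sym2 V → Fin 2, ∀ S : T.Subgraph, S.Connected → ∀ j,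
      2 * imbalance f S j ≤ R.leafCount R.root + 2 := by
  obtain ⟨col, hcol⟩ := R.exists_forall_isBalancedAt
  obtain ⟨f, hf⟩ := R.exists_colouring_parentEdge col
  refine ⟨f, fun S hS j => ?_⟩
  obtain ⟨m, A, hA, hE⟩ := R.exists_isSubtreeAt_of_connected hS
  have hsum : imbalance f S j = ∑ u ∈ A.erase m, (colourSign j ∘ col) u := by
    rw [imbalance_eq_sum_parentEdge hA hE]
    exact sum_congr rfl fun u hu => by rw [hf u (hA.ne_root hu), Function.comp_apply]
  have h₁ := hA.sum_le_maxWeight (colourSign j ∘ col)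
  have h₂ : R.maxWeight (colourSign j ∘ col) m ≤ R.leafCount m / 2 + 1 := ((hcol m).2 j).2
  have h₃ : R.leafCount m ≤ R.leafCount R.root := (R.isDescendant_root m).leafCount_le
  omega

theorem exists_connected_le_two_mul_imbalance {c₀ : V} (h : R.children R.root = {c₀})
    (f : Sym2 V → Fin 2) :
    ∃ S : T.Subgraph, S.Connected ∧ ∃ j, R.leafCount R.root + 1 ≤ 2 * imbalance f S j := by
  obtain ⟨m, j, hm⟩ := R.exists_le_two_mul_maxWeight (fun u => f (R.parentEdge u)) h
  obtain ⟨A, hA, hsum⟩ := R.exists_isSubtreeAt_sum_eq_maxWeight _ m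
  refine ⟨_, hA.connected_induce, j, ?_⟩
  rw [imbalance_eq_sum_parentEdge hA hA.edgeSet_induce]
  exact hsum ▸ hm

end Rooting

end SimpleGraph

open SimpleGraph

/-- **Two-colour discrepancy of subtrees of a tree.**
For every finite tree `T` with `ℓ` leaves, the 2-colour discrepancy of the family of all
subtrees of `T` equals `⌈ℓ/2⌉`: there is a 2-colouring all of whose subtrees have all colour
imbalances at most `⌈ℓ/2⌉`, and every 2-colouring admits a subtree and a colour with
imbalance at least `⌈ℓ/2⌉`. -/
theorem two_colour_discrepancy_eq
    {V : Type*} [Fintype V] (T : SimpleGraph V) [DecidableRel T.Adj]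
    (hT : T.IsTree) (ℓ : ℕ)
    (hℓ : ℓ = ({v : V | T.degree v = 1} : Set V).ncard) :
    (∃ f : Sym2 V → Fin 2, ∀ S : T.Subgraph, S.Connected → ∀ j : Fin 2,
      (2 : ℤ) * ({e ∈ S.edgeSet | f e = j} : Set (Sym2 V)).ncard
          - (S.edgeSet.ncard : ℤ) ≤ (⌈(ℓ : ℚ) / 2⌉ : ℤ)) ∧
    (∀ f : Sym2 V → Fin 2, ∃ S : T.Subgraph, S.Connected ∧ ∃ j : Fin 2,
      (⌈(ℓ : ℚ) / 2⌉ : ℤ) ≤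
        (2 : ℤ) * ({e ∈ S.edgeSet | f e = j} : Set (Sym2 V)).ncard
          - (S.edgeSet.ncard : ℤ)) := by
  classical
  rcases subsingleton_or_nontrivial V with hV | hV
  · have hℓ0 : ℓ = 0 := by simp [hℓ]
    obtain ⟨v⟩ := hT.connected.nonempty
    refine ⟨⟨0, fun S _ j => ?_⟩,
      fun f => ⟨_, Subgraph.singletonSubgraph_connected (v := v), 0, ?_⟩⟩
    all_goals simp [Subgraph.edgeSet_eq_empty_of_subsingleton, hℓ0]
  obtain ⟨r, hr⟩ := hT.exists_vert_degree_one_of_nontrivial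
  obtain ⟨R, rfl⟩ := hT.exists_rooting r
  obtain ⟨c₀, hc₀⟩ := R.exists_children_root_eq_singleton hr
  have hℓR : ℓ = R.leafCount R.root + 1 := hℓ.trans (R.ncard_degree_eq_one hr)
  refine ⟨?_, fun f => ?_⟩
  · obtain ⟨f, hf⟩ := R.exists_colouring_two_mul_imbalance_le
    exact ⟨f, fun S hS j => (le_ceil_half_iff ℓ _).mpr (by push_cast [hℓR]; exact hf S hS j)⟩
  · obtain ⟨S, hS, j, h⟩ := R.exists_connected_le_two_mul_imbalance hc₀ f
    exact ⟨S, hS, j, (ceil_half_le_iff ℓ _).mpr (by push_cast [hℓR]; exact h)⟩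
end

section
/- For every integer r ≥ 2 and every integer ℓ ≥ 1, the r-colour discrepancy of the family of all subtrees of the star S_ℓ with ℓ leaves equals (r-1)·⌈ℓ/r⌉. -/
open SimpleGraph

/-!
Colour the `i`-th edge of the star by `i mod r`. Every colour class then has at most `⌈ℓ/r⌉`
edges, and a subgraph with `n` edges, `k` of them of colour `j`, has imbalance
`r k - n ≤ (r - 1) k`. Conversely, for any colouring some colour `j` has at least `⌈ℓ/r⌉` edges
by pigeonhole, and the substar formed by exactly these edges is connected and has imbalance
`(r - 1)` times its number of edges.
-/

namespace StarDiscrepancy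

section Imbalance

variable {V β : Type*} {G : SimpleGraph V}

noncomputable def imbalance (r : ℕ) (f : Sym2 V → β) (S : G.Subgraph) (j : β) : ℤ :=
  r * {e ∈ S.edgeSet | f e = j}.ncard - S.edgeSet.ncard

lemma imbalance_le_of_ncard_le [Finite V] {r : ℕ} (hr : 0 < r) (f : Sym2 V → β)
    (S : G.Subgraph) (j : β) {c : ℤ} (hc : ({e ∈ S.edgeSet | f e = j}.ncard : ℤ) ≤ c) :
    imbalance r f S j ≤ (r - 1) * c := by
  have hle : ({e ∈ S.edgeSet | f e = j}.ncard : ℤ) ≤ S.edgeSet.ncard := by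
    exact_mod_cast Set.ncard_le_ncard (Set.sep_subset _ _)
  have hr' : (1 : ℤ) ≤ r := by exact_mod_cast hr
  unfold imbalance
  nlinarith

lemma imbalance_eq_of_forall_eq {r : ℕ} {f : Sym2 V → β} {S : G.Subgraph} {j : β}
    (h : ∀ e ∈ S.edgeSet, f e = j) :
    imbalance r f S j = (r - 1) * S.edgeSet.ncard := by
  rw [imbalance, Set.sep_eq_self_iff_mem_true.2 h]
  ring

end Imbalance

section Star

variable {α β : Type*}

def spoke (i : α) : Sym2 (Unit ⊕ α) := s(Sum.inl (), Sum.inr i)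

lemma spoke_injective : Function.Injective (spoke (α := α)) := by
  intro i i' h
  simpa [spoke] using h

lemma edgeSet_star_eq_range_spoke :
    (completeBipartiteGraph Unit α).edgeSet = Set.range spoke := by
  ext e
  induction e using Sym2.ind with
  | _ x y => cases x <;> cases y <;> simp [spoke, Sym2.eq_swap, eq_comm]

def subStar (s : Set α) : (completeBipartiteGraph Unit α).Subgraph :=
  (⊤ : (completeBipartiteGraph Unit α).Subgraph).induce (insert (Sum.inl ()) (Sum.inr '' s))

lemma subStar_connected (s : Set α) : (subStar s).Connected := by
  have hc : Sum.inl () ∈ (subStar s).verts := Set.mem_insert _ _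
  have toCentre : ∀ w : (subStar s).verts, (subStar s).coe.Reachable w ⟨_, hc⟩ := by
    rintro ⟨_, rfl | ⟨i, hi, rfl⟩⟩
    · rfl
    · exact Adj.reachable (by simp [subStar, hi])
  exact Subgraph.connected_iff.2 ⟨⟨fun u v => (toCentre u).trans (toCentre v).symm⟩, ⟨_, hc⟩⟩

lemma edgeSet_subStar (s : Set α) : (subStar s).edgeSet = spoke '' s := by
  ext e
  induction e using Sym2.ind with
  | _ x y => cases x <;> cases y <;> simp [subStar, spoke, Sym2.eq_swap, eq_comm]

lemma exists_connected_le_imbalance [Fintype α] [Fintype β] [Nonempty β]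
    (f : Sym2 (Unit ⊕ α) → β) :
    ∃ S : (completeBipartiteGraph Unit α).Subgraph, S.Connected ∧ ∃ j : β,
      ((Fintype.card β : ℤ) - 1) * ⌈(Fintype.card α : ℚ) / Fintype.card β⌉ ≤
        imbalance (Fintype.card β) f S j := by
  classical
  obtain ⟨j, hj⟩ := Fintype.exists_le_card_fiber_of_nsmul_le_card (fun i => f (spoke i))
    (b := (Fintype.card α : ℚ) / Fintype.card β) (by simp [mul_div_cancel₀])
  refine ⟨subStar {i | f (spoke i) = j}, subStar_connected _, j, ?_⟩
  rw [imbalance_eq_of_forall_eq, edgeSet_subStar, Set.ncard_image_of_injective _ spoke_injective]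
  · gcongr
    · have := Fintype.card_pos (α := β)
      omega
    · refine Int.ceil_le.2 ?_
      simpa [Set.ncard_eq_toFinset_card'] using hj
  · rw [edgeSet_subStar]
    rintro _ ⟨i, hi, rfl⟩
    exact hi

end Star

lemma ncard_mod_eq_le {ℓ r c : ℕ} (hr : 0 < r) (hℓ : ℓ ≤ r * c) (v : ℕ) :
    {i : Fin ℓ | (i : ℕ) % r = v}.ncard ≤ c := by
  calc _ ≤ (Finset.range c : Set ℕ).ncard := by
        refine Set.ncard_le_ncard_of_injOn (fun i => (i : ℕ) / r) ?_ ?_ (Finset.finite_toSet _)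
        · intro i _
          simpa [Nat.div_lt_iff_lt_mul hr, mul_comm] using i.isLt.trans_le hℓ
        · intro i hi i' hi' (h : (i : ℕ) / r = i' / r)
          simp only [Set.mem_ofPred_eq] at hi hi'
          exact Fin.ext (by rw [← Nat.div_add_mod i r, ← Nat.div_add_mod i' r, h, hi, hi'])
    _ = c := by simp

lemma ncard_mod_eq_le_ceil {ℓ r : ℕ} (hr : 0 < r) (v : ℕ) :
    ({i : Fin ℓ | (i : ℕ) % r = v}.ncard : ℤ) ≤ ⌈(ℓ : ℚ) / r⌉ := by
  rw [← Int.natCast_ceil_eq_ceil (by positivity)]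
  refine Int.ofNat_le.2 (ncard_mod_eq_le hr ?_ v)
  have := Nat.le_ceil ((ℓ : ℚ) / r)
  rw [div_le_iff₀ (by exact_mod_cast hr)] at this
  exact_mod_cast (by linarith : (ℓ : ℚ) ≤ r * ⌈(ℓ : ℚ) / r⌉₊)

noncomputable def modColouring (r ℓ : ℕ) (hr : 0 < r) : Sym2 (Unit ⊕ Fin ℓ) → Fin r :=
  Function.extend spoke (fun i => ⟨i % r, Nat.mod_lt _ hr⟩) (fun _ => ⟨0, hr⟩)

lemma imbalance_modColouring_le {r ℓ : ℕ} (hr : 0 < r)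
    (S : (completeBipartiteGraph Unit (Fin ℓ)).Subgraph) (j : Fin r) :
    imbalance r (modColouring r ℓ hr) S j ≤ (r - 1) * ⌈(ℓ : ℚ) / r⌉ := by
  refine imbalance_le_of_ncard_le hr _ S j ?_
  have hsub :
      {e ∈ S.edgeSet | modColouring r ℓ hr e = j} ⊆ spoke '' {i : Fin ℓ | i % r = j} := by
    rintro e ⟨he, rfl⟩
    obtain ⟨i, rfl⟩ : e ∈ Set.range spoke := edgeSet_star_eq_range_spoke ▸ S.edgeSet_subset he
    exact ⟨i, by simp [modColouring, spoke_injective.extend_apply], rfl⟩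
  calc _ ≤ ((spoke '' {i : Fin ℓ | i % r = j}).ncard : ℤ) := by
        exact_mod_cast Set.ncard_le_ncard hsub
    _ = {i : Fin ℓ | i % r = j}.ncard := by rw [Set.ncard_image_of_injective _ spoke_injective]
    _ ≤ _ := ncard_mod_eq_le_ceil hr j

end StarDiscrepancy

theorem star_discrepancy_eq_general (r ℓ : ℕ) (hr : 2 ≤ r) :
    (∃ f : Sym2 (Unit ⊕ Fin ℓ) → Fin r,
      ∀ S : (completeBipartiteGraph Unit (Fin ℓ)).Subgraph, S.Connected → ∀ j : Fin r,
        (r : ℤ) * ({e ∈ S.edgeSet | f e = j} : Set (Sym2 (Unit ⊕ Fin ℓ))).ncard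
            - (S.edgeSet.ncard : ℤ) ≤ ((r : ℤ) - 1) * (⌈(ℓ : ℚ) / r⌉ : ℤ)) ∧
    (∀ f : Sym2 (Unit ⊕ Fin ℓ) → Fin r,
      ∃ S : (completeBipartiteGraph Unit (Fin ℓ)).Subgraph, S.Connected ∧ ∃ j : Fin r,
        ((r : ℤ) - 1) * (⌈(ℓ : ℚ) / r⌉ : ℤ) ≤
          (r : ℤ) * ({e ∈ S.edgeSet | f e = j} : Set (Sym2 (Unit ⊕ Fin ℓ))).ncard
            - (S.edgeSet.ncard : ℤ)) := by
  have hr₀ : 0 < r := by omega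
  have : Nonempty (Fin r) := ⟨⟨0, hr₀⟩⟩
  refine ⟨⟨StarDiscrepancy.modColouring r ℓ hr₀,
    fun S _ j => StarDiscrepancy.imbalance_modColouring_le hr₀ S j⟩, fun f => ?_⟩
  obtain ⟨S, hS, j, hj⟩ := StarDiscrepancy.exists_connected_le_imbalance f
  simp only [Fintype.card_fin] at hj
  exact ⟨S, hS, j, hj⟩

/-- **Multicolour discrepancy of subtrees of a star.**
For every `r ≥ 2` and `ℓ ≥ 1`, the `r`-colour discrepancy of the family of all subtrees of
the star `S_ℓ` with `ℓ` leaves equals `(r-1)·⌈ℓ/r⌉`: there is an `r`-colouring of the edges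
all of whose subtrees have all colour imbalances at most `(r-1)·⌈ℓ/r⌉`, and every
`r`-colouring admits a subtree and a colour with imbalance at least `(r-1)·⌈ℓ/r⌉`. -/
theorem star_discrepancy_eq (r ℓ : ℕ) (hr : 2 ≤ r) (hℓ : 1 ≤ ℓ) :
    (∃ f : Sym2 (Unit ⊕ Fin ℓ) → Fin r,
      ∀ S : (completeBipartiteGraph Unit (Fin ℓ)).Subgraph, S.Connected → ∀ j : Fin r,
        (r : ℤ) * ({e ∈ S.edgeSet | f e = j} : Set (Sym2 (Unit ⊕ Fin ℓ))).ncard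
            - (S.edgeSet.ncard : ℤ) ≤ ((r : ℤ) - 1) * (⌈(ℓ : ℚ) / r⌉ : ℤ)) ∧
    (∀ f : Sym2 (Unit ⊕ Fin ℓ) → Fin r,
      ∃ S : (completeBipartiteGraph Unit (Fin ℓ)).Subgraph, S.Connected ∧ ∃ j : Fin r,
        ((r : ℤ) - 1) * (⌈(ℓ : ℚ) / r⌉ : ℤ) ≤
          (r : ℤ) * ({e ∈ S.edgeSet | f e = j} : Set (Sym2 (Unit ⊕ Fin ℓ))).ncard
            - (S.edgeSet.ncard : ℤ)) :=
  star_discrepancy_eq_general r ℓ hr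
end

section
/- For every integer r ≥ 2 and every integer n ≥ 2, the r-colour discrepancy of the family of all subtrees of the path P_n on n vertices equals r − 1. -/
open SimpleGraph

/-- At most one residue-`c` element in a window of length ≤ r. -/
lemma filter_mod_card_le_one (r c a b : ℕ) (h : b ≤ a + r) :
    ((Finset.Ico a b).filter (fun i => i % r = c)).card ≤ 1 := by
  apply Finset.card_le_one.mpr
  intro x hx y hy
  simp only [Finset.mem_filter, Finset.mem_Ico] at hx hy
  have hmod : x % r = y % r := hx.2.trans hy.2.symm
  rcases le_total x y with hle | hle
  · have h0 : (y - x) % r = 0 := Nat.sub_mod_eq_zero_of_mod_eq hmod.symm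
    have hlt : y - x < r := by omega
    rw [Nat.mod_eq_of_lt hlt] at h0; omega
  · have h0 : (x - y) % r = 0 := Nat.sub_mod_eq_zero_of_mod_eq hmod
    have hlt : x - y < r := by omega
    rw [Nat.mod_eq_of_lt hlt] at h0; omega

lemma count_mod_le (r c : ℕ) (hr : 1 ≤ r) :
    ∀ k a, r * ((Finset.Ico a (a + k)).filter (fun i => i % r = c)).card ≤ k + (r - 1) := by
  intro k
  induction k using Nat.strong_induction_on with
  | _ k ih =>
    intro a
    rcases Nat.eq_zero_or_pos k with rfl | hk0
    · simp
    by_cases hk : k ≤ r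
    · have hcard := filter_mod_card_le_one r c a (a + k) (by omega)
      calc r * ((Finset.Ico a (a + k)).filter (fun i => i % r = c)).card
          ≤ r * 1 := Nat.mul_le_mul_left r hcard
        _ ≤ k + (r - 1) := by omega
    · have hsplit : Finset.Ico a (a + k) = Finset.Ico a (a + r) ∪ Finset.Ico (a + r) (a + k) :=
        (Finset.Ico_union_Ico_eq_Ico (by omega) (by omega)).symm
      rw [hsplit, Finset.filter_union]
      have h1 := filter_mod_card_le_one r c a (a + r) (le_refl _)
      have h2 := ih (k - r) (by omega) (a + r)
      rw [show a + r + (k - r) = a + k by omega] at h2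
      calc r * (((Finset.Ico a (a + r)).filter (fun i => i % r = c)) ∪
              ((Finset.Ico (a + r) (a + k)).filter (fun i => i % r = c))).card
          ≤ r * (((Finset.Ico a (a + r)).filter (fun i => i % r = c)).card +
              ((Finset.Ico (a + r) (a + k)).filter (fun i => i % r = c)).card) :=
            Nat.mul_le_mul_left r (Finset.card_union_le _ _)
        _ = r * ((Finset.Ico a (a + r)).filter (fun i => i % r = c)).card +
              r * ((Finset.Ico (a + r) (a + k)).filter (fun i => i % r = c)).card := by ring
        _ ≤ r * 1 + ((k - r) + (r - 1)) := Nat.add_le_add (Nat.mul_le_mul_left r h1) h2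
        _ ≤ k + (r - 1) := by omega

/-- If a walk in a subgraph of the path graph goes from a vertex at position ≤ c to a vertex
at position > c, it uses the edge `(c, c+1)`. -/
lemma path_walk_cross {n : ℕ} {S : (pathGraph n).Subgraph} {u v : S.verts}
    (w : S.coe.Walk u v) : ∀ c : ℕ, ((u : Fin n) : ℕ) ≤ c → c < ((v : Fin n) : ℕ) →
    ∃ x y : Fin n, S.Adj x y ∧ (x : ℕ) = c ∧ (y : ℕ) = c + 1 := by
  induction w with
  | nil => intro c h1 h2; omega
  | cons hab p ih =>
    intro c h1 h2
    rename_i a b v'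
    have hadj : S.Adj (a : Fin n) (b : Fin n) := hab
    have hpg := pathGraph_adj.mp hadj.adj_sub
    rcases hpg with h | h
    · by_cases hc : ((a : Fin n) : ℕ) = c
      · exact ⟨a, b, hadj, hc, by omega⟩
      · exact ih c (by omega) h2
    · exact ih c (by omega) h2

lemma edge_form {n : ℕ} {S : (pathGraph n).Subgraph} {e : Sym2 (Fin n)} (he : e ∈ S.edgeSet) :
    ∃ x y : Fin n, S.Adj x y ∧ (x : ℕ) + 1 = (y : ℕ) ∧ e = s(x, y) := by
  induction e with
  | _ u v =>
    have hadj : S.Adj u v := he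
    rcases pathGraph_adj.mp hadj.adj_sub with h | h
    · exact ⟨u, v, hadj, h, rfl⟩
    · exact ⟨v, u, hadj.symm, h, Sym2.eq_swap⟩

/-- **Multicolour discrepancy of subtrees of a path.**
For every `r ≥ 2` and `n ≥ 2`, the `r`-colour discrepancy of the family of all subtrees of
the path `P_n` on `n` vertices equals `r - 1`: there is an `r`-colouring of the edges all of
whose subtrees have all colour imbalances at most `r - 1`, and every `r`-colouring admits a
subtree and a colour with imbalance at least `r - 1`. -/
theorem path_discrepancy_eq (r n : ℕ) (hr : 2 ≤ r) (hn : 2 ≤ n) :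
    (∃ f : Sym2 (Fin n) → Fin r,
      ∀ S : (pathGraph n).Subgraph, S.Connected → ∀ j : Fin r,
        (r : ℤ) * ({e ∈ S.edgeSet | f e = j} : Set (Sym2 (Fin n))).ncard
            - (S.edgeSet.ncard : ℤ) ≤ (r : ℤ) - 1) ∧
    (∀ f : Sym2 (Fin n) → Fin r,
      ∃ S : (pathGraph n).Subgraph, S.Connected ∧ ∃ j : Fin r,
        (r : ℤ) - 1 ≤
          (r : ℤ) * ({e ∈ S.edgeSet | f e = j} : Set (Sym2 (Fin n))).ncard
            - (S.edgeSet.ncard : ℤ)) := by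
  classical
  have hr0 : 0 < r := by omega
  constructor
  · -- upper bound
    set idx : Sym2 (Fin n) → ℕ :=
      Sym2.lift ⟨fun a b => min (a : ℕ) (b : ℕ), fun a b => by simp [min_comm]⟩ with hidx
    refine ⟨fun e => ⟨idx e % r, Nat.mod_lt _ hr0⟩, ?_⟩
    intro S hconn j
    have hfin : S.edgeSet.Finite := Set.toFinite _
    set E : Finset (Sym2 (Fin n)) := hfin.toFinset with hE
    have hmemE : ∀ e, e ∈ E ↔ e ∈ S.edgeSet := fun e => hfin.mem_toFinset
    -- injectivity of idx on E
    have hinj : ∀ e ∈ E, ∀ e' ∈ E, idx e = idx e' → e = e' := by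
      intro e he e' he' hee
      obtain ⟨x, y, hadj, hxy, rfl⟩ := edge_form ((hmemE e).mp he)
      obtain ⟨x', y', hadj', hxy', rfl⟩ := edge_form ((hmemE e').mp he')
      have hix : idx s(x, y) = (x : ℕ) := by simp [hidx]; omega
      have hix' : idx s(x', y') = (x' : ℕ) := by simp [hidx]; omega
      rw [hix, hix'] at hee
      have hx : x = x' := Fin.ext hee
      have hy : y = y' := Fin.ext (by omega)
      rw [hx, hy]
    have hncard_E : S.edgeSet.ncard = E.card := by
      rw [Set.ncard_eq_toFinset_card _ hfin]
    have hncard_F : ({e ∈ S.edgeSet | (⟨idx e % r, Nat.mod_lt _ hr0⟩ : Fin r) = j} :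
        Set (Sym2 (Fin n))).ncard = (E.filter (fun e => idx e % r = (j : ℕ))).card := by
      rw [show ({e ∈ S.edgeSet | (⟨idx e % r, Nat.mod_lt _ hr0⟩ : Fin r) = j} :
          Set (Sym2 (Fin n))) = ↑(E.filter (fun e => idx e % r = (j : ℕ))) by
        ext e
        simp only [Set.mem_setOf_eq, Finset.coe_filter, hmemE, Fin.ext_iff]]
      exact Set.ncard_coe_finset _
    rw [hncard_E, hncard_F]
    rcases Finset.eq_empty_or_nonempty E with hEe | hEne
    · simp [hEe]; omega
    · -- A is the index set
      set A : Finset ℕ := E.image idx with hA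
      have hAne : A.Nonempty := hEne.image idx
      set lo := A.min' hAne with hlo
      set hi := A.max' hAne with hhi
      have hmemA : ∀ c, c ∈ A ↔ ∃ x y : Fin n, S.Adj x y ∧ (x : ℕ) = c ∧ (y : ℕ) = c + 1 := by
        intro c
        constructor
        · intro hc
          obtain ⟨e, he, rfl⟩ := Finset.mem_image.mp hc
          obtain ⟨x, y, hadj, hxy, rfl⟩ := edge_form ((hmemE e).mp he)
          exact ⟨x, y, hadj, by simp [hidx]; omega, by simp [hidx]; omega⟩
        · rintro ⟨x, y, hadj, hx, hy⟩
          refine Finset.mem_image.mpr ⟨s(x, y), (hmemE _).mpr hadj, ?_⟩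
          simp [hidx]; omega
      -- A is the interval [lo, hi]
      have hAeq : A = Finset.Ico lo (hi + 1) := by
        ext c
        simp only [Finset.mem_Ico]
        constructor
        · intro hc
          exact ⟨A.min'_le c hc, by have := A.le_max' c hc; omega⟩
        · rintro ⟨h1, h2⟩
          obtain ⟨xl, yl, hadjl, hxl, hyl⟩ := (hmemA lo).mp (A.min'_mem hAne)
          obtain ⟨xh, yh, hadjh, hxh, hyh⟩ := (hmemA hi).mp (A.max'_mem hAne)
          have hu : (xl : Fin n) ∈ S.verts := S.edge_vert hadjl
          have hv : (yh : Fin n) ∈ S.verts := S.edge_vert hadjh.symm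
          obtain ⟨w⟩ := hconn.coe.preconnected ⟨xl, hu⟩ ⟨yh, hv⟩
          obtain ⟨x, y, hadj, hx, hy⟩ := path_walk_cross w c (by simpa [hxl] using h1)
            (by simp only [hyh]; omega)
          exact (hmemA c).mpr ⟨x, y, hadj, hx, hy⟩
      have hcardA : A.card = E.card := Finset.card_image_of_injOn (fun e he e' he' => hinj e he e' he')
      have hfilter : (E.filter (fun e => idx e % r = (j : ℕ))).card
          = (A.filter (fun i => i % r = (j : ℕ))).card := by
        rw [hA, Finset.filter_image]
        exact (Finset.card_image_of_injOn (fun e he e' he' =>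
          hinj e (Finset.mem_of_mem_filter e he) e' (Finset.mem_of_mem_filter e' he'))).symm
      have hkey : r * (E.filter (fun e => idx e % r = (j : ℕ))).card ≤ E.card + (r - 1) := by
        rw [hfilter, ← hcardA, hAeq]
        have hle : lo ≤ hi + 1 := by
          have := A.le_max' lo (A.min'_mem hAne); omega
        have := count_mod_le r (j : ℕ) (by omega) (hi + 1 - lo) lo
        rw [show lo + (hi + 1 - lo) = hi + 1 by omega] at this
        calc r * ((Finset.Ico lo (hi + 1)).filter (fun i => i % r = (j : ℕ))).card
            ≤ (hi + 1 - lo) + (r - 1) := this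
          _ = (Finset.Ico lo (hi + 1)).card + (r - 1) := by rw [Nat.card_Ico]
      have hcast : ((r * (E.filter (fun e => idx e % r = (j : ℕ))).card : ℕ) : ℤ)
          ≤ ((E.card + (r - 1) : ℕ) : ℤ) := Nat.cast_le.mpr hkey
      push_cast [Nat.cast_sub (by omega : 1 ≤ r)] at hcast
      linarith
  · -- lower bound: single edge
    intro f
    have h01 : (pathGraph n).Adj ⟨0, by omega⟩ ⟨1, by omega⟩ := pathGraph_adj.mpr (Or.inl rfl)
    refine ⟨(pathGraph n).subgraphOfAdj h01, SimpleGraph.Subgraph.subgraphOfAdj_connected h01,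
      f s(⟨0, by omega⟩, ⟨1, by omega⟩), ?_⟩
    have hes : ((pathGraph n).subgraphOfAdj h01).edgeSet
        = {s((⟨0, by omega⟩ : Fin n), ⟨1, by omega⟩)} := SimpleGraph.edgeSet_subgraphOfAdj h01
    rw [hes]
    have h1 : ({e ∈ ({s((⟨0, by omega⟩ : Fin n), ⟨1, by omega⟩)} : Set (Sym2 (Fin n))) |
        f e = f s(⟨0, by omega⟩, ⟨1, by omega⟩)} : Set (Sym2 (Fin n)))
        = {s((⟨0, by omega⟩ : Fin n), ⟨1, by omega⟩)} := by
      ext e; simp only [Set.mem_setOf_eq, Set.mem_singleton_iff]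
      exact ⟨fun h => h.1, fun h => ⟨h, by rw [h]⟩⟩
    rw [h1, Set.ncard_singleton]
    push_cast
    linarith
end

section
/- For every pair of integers r ≥ 2 and ℓ ≥ 2, for the spider Sp^r_ℓ (a root vertex attached to ℓ vertex-disjoint paths of length r) and every r-colouring f of its edges, there exists a subtree S containing the root and a colour j ∈ {1,…,r} such that r·|{e ∈ E(S) : f(e) = j}| − |E(S)| ≥ ⌈(r-1)ℓ/2⌉. -/
/-!
On a single leg coloured by `c : Fin r → Fin r`, cut the leg for colour `j` just after the last
edge of colour `j`, at length `t_j`. This prefix contains every `j`-edge of the leg, so the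
imbalances of the `r` prefixes add up to `r·r - ∑ t_j`. The nonzero `t_j` are distinct numbers
in `{1, …, r}`, whence `∑ t_j ≤ r(r+1)/2` and the imbalances add up to at least `r(r-1)/2`.
Summing over the `ℓ` legs, some colour `j` gets total imbalance at least `ℓ(r-1)/2`, and the
subtree made of the `j`-prefixes of all legs realises it, because imbalance is additive over legs.
-/

open SimpleGraph

/-- The spider `Sp^k_ℓ`: a root vertex (`none`) attached to `ℓ` internally disjoint paths
(legs) of length `k`.  Vertex `some (i, h)` is the `(h+1)`-st vertex (from the root) of the
`(i+1)`-st leg. -/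
def spiderGraph (ℓ k : ℕ) : SimpleGraph (Option (Fin ℓ × Fin k)) :=
  SimpleGraph.fromRel (fun a b =>
    (a = none ∧ ∃ p : Fin ℓ × Fin k, b = some p ∧ (p.2 : ℕ) = 0) ∨
    (∃ (i : Fin ℓ) (h h' : Fin k), a = some (i, h) ∧ b = some (i, h') ∧
      (h' : ℕ) = (h : ℕ) + 1))

open Finset

lemma card_filter_prod {α β : Type*} [Fintype α] [Fintype β] (P : α × β → Prop)
    [DecidablePred P] : #{p | P p} = ∑ a, #{b | P (a, b)} := by
  simp only [card_filter, Fintype.sum_prod_type]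

lemma exists_le_sum_of_forall_le_sum {ι κ : Type*} [Fintype ι] [Fintype κ] [Nonempty κ]
    (a : ι → κ → ℤ) (B : ℤ) (h : ∀ i, Fintype.card κ * B ≤ ∑ j, a i j) :
    ∃ j, Fintype.card ι * B ≤ ∑ i, a i j := by
  obtain ⟨j, -, hj⟩ := exists_le_of_sum_le univ_nonempty <| calc
    ∑ _j : κ, (Fintype.card ι * B) = ∑ _i : ι, (Fintype.card κ * B) := by
      simp only [sum_const, card_univ, nsmul_eq_mul]; ring
    _ ≤ ∑ i, ∑ j, a i j := sum_le_sum fun i _ => h i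
    _ = ∑ j, ∑ i, a i j := sum_comm
  exact ⟨j, hj⟩

section LegColouring

variable {n : ℕ} {κ : Type*} [DecidableEq κ] (c : Fin n → κ)

def prefixLen (j : κ) : ℕ := ({h | c h = j} : Finset (Fin n)).sup fun h => h + 1

def prefixImbalance (m : ℕ) (j : κ) (t : ℕ) : ℤ :=
  m * #{h : Fin n | h < t ∧ c h = j} - #{h : Fin n | h < t}

variable {c}

lemma prefixLen_le (j : κ) : prefixLen c j ≤ n :=
  Finset.sup_le fun h _ => h.isLt

lemma lt_prefixLen {h : Fin n} {j : κ} (hj : c h = j) : (h : ℕ) < prefixLen c j :=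
  Nat.lt_of_succ_le <| Finset.le_sup (f := fun h : Fin n => (h : ℕ) + 1) (by simpa using hj)

lemma exists_prefixLen_eq_succ {j : κ} (hj : prefixLen c j ≠ 0) :
    ∃ h, c h = j ∧ prefixLen c j = h + 1 := by
  have hne : ({h | c h = j} : Finset (Fin n)).Nonempty := by
    by_contra hemp
    simp [prefixLen, not_nonempty_iff_eq_empty.mp hemp] at hj
  obtain ⟨h, hh, heq⟩ := exists_mem_eq_sup _ hne fun h : Fin n => (h : ℕ) + 1
  exact ⟨h, by simpa using hh, heq⟩

lemma prefixLen_injOn : Set.InjOn (prefixLen c) {j | prefixLen c j ≠ 0} := by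
  intro j hj j' hj' heq
  obtain ⟨h, rfl, hh⟩ := exists_prefixLen_eq_succ hj
  obtain ⟨h', rfl, hh'⟩ := exists_prefixLen_eq_succ hj'
  rw [Fin.ext (by omega : (h : ℕ) = h')]

lemma two_mul_sum_prefixLen_le [Fintype κ] : 2 * ∑ j, prefixLen c j ≤ (n + 1) * n := calc
  2 * ∑ j, prefixLen c j
      = 2 * ∑ x ∈ ({j | prefixLen c j ≠ 0} : Finset κ).image (prefixLen c), x := by
    rw [sum_image (by simpa using prefixLen_injOn), sum_filter_ne_zero]
  _ ≤ 2 * ∑ x ∈ range (n + 1), x := by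
    refine Nat.mul_le_mul_left 2 (sum_le_sum_of_subset fun x hx => ?_)
    obtain ⟨j, -, rfl⟩ := mem_image.mp hx
    exact mem_range_succ_iff.mpr (prefixLen_le j)
  _ = (n + 1) * n := by rw [mul_comm, sum_range_id_mul_two, Nat.add_sub_cancel]

lemma prefixImbalance_prefixLen (m : ℕ) (j : κ) :
    prefixImbalance c m j (prefixLen c j) = m * #{h | c h = j} - prefixLen c j := by
  have hcover : #{h : Fin n | h < prefixLen c j ∧ c h = j} = #{h | c h = j} :=
    congrArg card <| filter_congr fun h _ => and_iff_right_of_imp lt_prefixLen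
  rw [prefixImbalance, hcover, Fin.card_filter_val_lt, min_eq_right (prefixLen_le j)]

lemma le_two_mul_sum_prefixImbalance [Fintype κ] (m : ℕ) :
    (2 * m - (n + 1) : ℤ) * n ≤ 2 * ∑ j, prefixImbalance c m j (prefixLen c j) := by
  have hfibres : ∑ j, (#{h | c h = j} : ℤ) = n := by
    rw [← Nat.cast_sum, ← card_eq_sum_card_fiberwise fun h _ => mem_univ (c h), card_univ,
      Fintype.card_fin]
  have hlen : 2 * ∑ j, (prefixLen c j : ℤ) ≤ (n + 1) * n := by
    exact_mod_cast two_mul_sum_prefixLen_le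
  simp only [prefixImbalance_prefixLen, sum_sub_distrib, ← mul_sum]
  rw [hfibres]
  linarith

end LegColouring

namespace Spider

variable {ℓ r : ℕ}

-- `legVertex i n` is the vertex at distance `n` from the root on leg `i`; junk `none` for `n > r`.
def legVertex (i : Fin ℓ) : ℕ → Option (Fin ℓ × Fin r)
  | 0 => none
  | n + 1 => if hn : n < r then some (i, ⟨n, hn⟩) else none

def legEdge (i : Fin ℓ) (h : Fin r) : Sym2 (Option (Fin ℓ × Fin r)) :=
  s(legVertex i h, legVertex i (h + 1))

@[simp]
lemma legVertex_succ (i : Fin ℓ) (h : Fin r) : legVertex i (h + 1) = some (i, h) := by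
  simp [legVertex]

lemma legVertex_eq_some {i i' : Fin ℓ} {n : ℕ} {h : Fin r} (hv : legVertex i n = some (i', h)) :
    i = i' ∧ n = h + 1 := by
  cases n with
  | zero => cases hv
  | succ k =>
    simp only [legVertex] at hv
    split_ifs at hv
    cases hv
    exact ⟨rfl, rfl⟩

lemma adj_legVertex (i : Fin ℓ) (h : Fin r) :
    (spiderGraph ℓ r).Adj (legVertex i h) (legVertex i (h + 1)) := by
  obtain ⟨_ | k, hk⟩ := h
  · simp [spiderGraph, legVertex]
    omega
  · simp [spiderGraph, legVertex, Nat.lt_of_succ_lt hk]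
    omega

lemma legEdge_injective : Function.Injective fun p : Fin ℓ × Fin r => legEdge p.1 p.2 := by
  rintro ⟨i, h⟩ ⟨i', h'⟩ he
  rcases Sym2.eq_iff.mp he with ⟨-, he⟩ | ⟨he₁, he₂⟩
  · simpa using he
  · rw [legVertex_succ] at he₁ he₂
    have := (legVertex_eq_some he₁).2
    have := (legVertex_eq_some he₂.symm).2
    omega

def legPrefixes (t : Fin ℓ → ℕ) : (spiderGraph ℓ r).Subgraph where
  verts := insert none {v | ∃ i, ∃ n ≤ t i, legVertex i n = v}
  Adj a b := ∃ i, ∃ h : Fin r, (h : ℕ) < t i ∧ s(a, b) = legEdge i h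
  adj_sub := by
    rintro a b ⟨i, h, -, he⟩
    rcases Sym2.eq_iff.mp he with ⟨rfl, rfl⟩ | ⟨rfl, rfl⟩
    exacts [adj_legVertex i h, (adj_legVertex i h).symm]
  edge_vert := by
    rintro a b ⟨i, h, hlt, he⟩
    rcases Sym2.eq_iff.mp he with ⟨rfl, -⟩ | ⟨rfl, -⟩
    exacts [Or.inr ⟨i, h, hlt.le, rfl⟩, Or.inr ⟨i, h + 1, hlt, rfl⟩]
  symm := ⟨fun _ _ ⟨i, h, hlt, he⟩ => ⟨i, h, hlt, Sym2.eq_swap.trans he⟩⟩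

variable {t : Fin ℓ → ℕ}

lemma mem_legPrefixes_verts {v : Option (Fin ℓ × Fin r)} :
    v ∈ (legPrefixes t).verts ↔ v = none ∨ ∃ i, ∃ n ≤ t i, legVertex i n = v := Iff.rfl

lemma legPrefixes_adj {a b : Option (Fin ℓ × Fin r)} :
    (legPrefixes t).Adj a b ↔ ∃ i, ∃ h : Fin r, (h : ℕ) < t i ∧ s(a, b) = legEdge i h :=
  Iff.rfl

lemma root_mem_legPrefixes : none ∈ (legPrefixes (r := r) t).verts :=
  mem_legPrefixes_verts.mpr (Or.inl rfl)

lemma reachable_root_legVertex (i : Fin ℓ) {n : ℕ} (hn : n ≤ t i) :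
    (legPrefixes t).coe.Reachable ⟨none, root_mem_legPrefixes⟩
      ⟨legVertex (r := r) i n, mem_legPrefixes_verts.mpr (Or.inr ⟨i, n, hn, rfl⟩)⟩ := by
  induction n with
  | zero => rfl
  | succ k ih =>
    by_cases hk : k < r
    · exact (ih (by omega)).trans
        (Subgraph.Adj.coe (legPrefixes_adj.mpr ⟨i, ⟨k, hk⟩, hn, rfl⟩)).reachable
    · convert Reachable.refl _ using 2
      simp [legVertex, hk]

lemma legPrefixes_connected : (legPrefixes (r := r) t).Connected := by
  have hroot : ∀ v : (legPrefixes (r := r) t).verts,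
      (legPrefixes t).coe.Reachable ⟨none, root_mem_legPrefixes⟩ v := by
    rintro ⟨v, hv⟩
    obtain rfl | ⟨i, n, hn, rfl⟩ := mem_legPrefixes_verts.mp hv
    exacts [Reachable.refl _, reachable_root_legVertex i hn]
  exact Subgraph.connected_iff.mpr
    ⟨⟨fun u v => (hroot u).symm.trans (hroot v)⟩, _, root_mem_legPrefixes⟩

lemma edgeSet_legPrefixes :
    (legPrefixes (r := r) t).edgeSet
      = (fun p : Fin ℓ × Fin r => legEdge p.1 p.2) '' {p | p.2 < t p.1} := by
  ext e
  induction e using Sym2.ind with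
  | _ a b =>
    rw [Subgraph.mem_edgeSet, legPrefixes_adj]
    exact ⟨fun ⟨i, h, hlt, he⟩ => ⟨(i, h), hlt, he.symm⟩,
      fun ⟨⟨i, h⟩, hlt, he⟩ => ⟨i, h, hlt, he.symm⟩⟩

lemma imbalance_legPrefixes {κ : Type*} [DecidableEq κ]
    (f : Sym2 (Option (Fin ℓ × Fin r)) → κ) (m : ℕ) (j : κ) :
    (m : ℤ) * ({e ∈ (legPrefixes (r := r) t).edgeSet | f e = j} : Set _).ncard
        - (legPrefixes (r := r) t).edgeSet.ncard
      = ∑ i, prefixImbalance (fun h => f (legEdge i h)) m j (t i) := by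
  have hcolour : {e ∈ (legPrefixes t).edgeSet | f e = j}
      = (fun p : Fin ℓ × Fin r => legEdge p.1 p.2) ''
        ↑({p | p.2 < t p.1 ∧ f (legEdge p.1 p.2) = j} : Finset (Fin ℓ × Fin r)) := by
    ext e
    rw [edgeSet_legPrefixes, coe_filter_univ]
    constructor
    · rintro ⟨⟨p, hp, rfl⟩, hj⟩
      exact ⟨p, ⟨hp, hj⟩, rfl⟩
    · rintro ⟨p, ⟨hp, hj⟩, rfl⟩
      exact ⟨⟨p, hp, rfl⟩, hj⟩
  rw [hcolour, edgeSet_legPrefixes, ← coe_filter_univ,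
    Set.ncard_image_of_injective _ legEdge_injective,
    Set.ncard_image_of_injective _ legEdge_injective, Set.ncard_coe_finset, Set.ncard_coe_finset,
    card_filter_prod, card_filter_prod]
  simp only [prefixImbalance, Nat.cast_sum, mul_sum, ← sum_sub_distrib]

end Spider

open Spider in
theorem spider_discrepancy_lower_bound_general (r ℓ : ℕ)
    (f : Sym2 (Option (Fin ℓ × Fin r)) → Fin r) :
    ∃ S : (spiderGraph ℓ r).Subgraph, S.Connected ∧ none ∈ S.verts ∧ ∃ j : Fin r,
      (⌈(((r : ℚ) - 1) * ℓ) / 2⌉ : ℤ) ≤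
        (r : ℤ) * ({e ∈ S.edgeSet | f e = j} : Set (Sym2 (Option (Fin ℓ × Fin r)))).ncard
          - (S.edgeSet.ncard : ℤ) := by
  have : Nonempty (Fin r) := ⟨f s(none, none)⟩
  let c (i : Fin ℓ) (h : Fin r) : Fin r := f (legEdge i h)
  obtain ⟨j, hj⟩ := exists_le_sum_of_forall_le_sum
    (fun i j => 2 * prefixImbalance (c i) r j (prefixLen (c i) j)) (r - 1) fun i => by
      rw [Fintype.card_fin, ← mul_sum]
      convert le_two_mul_sum_prefixImbalance (c := c i) r using 1
      ring
  refine ⟨legPrefixes fun i => prefixLen (c i) j, legPrefixes_connected, root_mem_legPrefixes,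
    j, ?_⟩
  rw [imbalance_legPrefixes, Int.ceil_le, div_le_iff₀ two_pos]
  simp only [Fintype.card_fin, ← mul_sum] at hj
  have hj' : ((r - 1) * ℓ : ℤ)
      ≤ (∑ i, prefixImbalance (c i) r j (prefixLen (c i) j)) * 2 := by
    linarith
  exact_mod_cast hj'

/-- **Spider lower bound.**  For `r ≥ 2` and `ℓ ≥ 2`, for every `r`-colouring `f` of the
edges of the spider `Sp^r_ℓ` there is a subtree `S` containing the root and a colour `j`
whose imbalance `r·|{e ∈ E(S) : f e = j}| − |E(S)|` is at least `⌈(r-1)ℓ/2⌉`. -/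
theorem spider_discrepancy_lower_bound (r ℓ : ℕ) (hr : 2 ≤ r) (hℓ : 2 ≤ ℓ)
    (f : Sym2 (Option (Fin ℓ × Fin r)) → Fin r) :
    ∃ S : (spiderGraph ℓ r).Subgraph, S.Connected ∧ none ∈ S.verts ∧ ∃ j : Fin r,
      (⌈(((r : ℚ) - 1) * ℓ) / 2⌉ : ℤ) ≤
        (r : ℤ) * ({e ∈ S.edgeSet | f e = j} : Set (Sym2 (Option (Fin ℓ × Fin r)))).ncard
          - (S.edgeSet.ncard : ℤ) :=
  spider_discrepancy_lower_bound_general r ℓ f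
end

section
/- For every integer d ≥ 1 and every finite tree T with ℓ leaves, the d-dimensional discrepancy of the family of all subtrees of T satisfies D^d(T,𝒯) ≥ ℓ / (d · B(d/2, 1/2)), where B denotes the Beta function; that is, for every colouring f : E(T) → S^d there exists a subtree S of T with ‖Σ_{e∈E(S)} f(e)‖ ≥ ℓ / (d · B(d/2, 1/2)). -/
/-!
Fix a unit vector `θ` and project the colouring onto it. For real edge weights on a tree, deleting
the leaves whose edge has negative weight, resp. those whose edge has nonnegative weight, leaves two
subtrees whose weights differ by the total absolute weight of the leaf edges, so one of them weighs
at least half of it. (A single edge, whose two ends are both leaves, is treated directly.)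

It remains to choose `θ`. For a unit vector `u ∈ ℝ^{d+1}` the mean of `|⟪θ, u⟫|` over the sphere is
`2 / (d B(d/2, 1/2))`: integrating `|⟪x, u⟫| e^{-‖x‖²}` and `e^{-‖x‖²}` in polar coordinates gives
the mean as a ratio of Gamma values. Hence some `θ` gives the `ℓ` leaf edges total projected weight
at least `2ℓ / (d B(d/2, 1/2))`.
-/

open SimpleGraph

/-- The real Beta function, `B(a, b) = Γ(a)Γ(b)/Γ(a+b)`. -/
noncomputable def realBeta (a b : ℝ) : ℝ :=
  Real.Gamma a * Real.Gamma b / Real.Gamma (a + b)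

open scoped RealInnerProductSpace

section Sphere

open MeasureTheory Metric Real Set

theorem MeasureTheory.Measure.integral_volumeIoiPow (n : ℕ) (G : ℝ → ℝ) :
    ∫ r, G r ∂(volumeIoiPow n) = ∫ r in Ioi (0 : ℝ), r ^ n * G r := by
  simp only [volumeIoiPow, ENNReal.ofReal]
  rw [integral_withDensity_eq_integral_smul ((measurable_subtype_coe.pow_const _).real_toNNReal),
    integral_subtype_comap measurableSet_Ioi fun r => Real.toNNReal (r ^ n) • G r]
  refine setIntegral_congr_fun measurableSet_Ioi fun r hr => ?_
  rw [NNReal.smul_def, Real.coe_toNNReal _ (pow_nonneg hr.out.le _), smul_eq_mul]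

theorem integral_sphere_mul_fun_norm_addHaar {E : Type*} [NormedAddCommGroup E]
    [NormedSpace ℝ E] [Nontrivial E] [FiniteDimensional ℝ E] [MeasurableSpace E] [BorelSpace E]
    (μ : Measure E) [μ.IsAddHaarMeasure] (F : E → ℝ) (G : ℝ → ℝ) :
    ∫ x, F (‖x‖⁻¹ • x) * G ‖x‖ ∂μ =
      (∫ θ, F θ ∂μ.toSphere) * ∫ r in Ioi (0 : ℝ), r ^ (Module.finrank ℝ E - 1) * G r := by
  calc ∫ x, F (‖x‖⁻¹ • x) * G ‖x‖ ∂μ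
      = ∫ x : ({0}ᶜ : Set E), F (‖x.1‖⁻¹ • x.1) * G ‖x.1‖ ∂(μ.comap (↑)) := by
        rw [integral_subtype_comap (measurableSet_singleton _).compl
          fun x => F (‖x‖⁻¹ • x) * G ‖x‖, restrict_compl_singleton]
    _ = ∫ p, F p.1 * G p.2 ∂μ.toSphere.prod (.volumeIoiPow (Module.finrank ℝ E - 1)) := by
        simpa using μ.measurePreserving_homeomorphUnitSphereProd.integral_comp
          (Homeomorph.measurableEmbedding _) fun p => F p.1 * G p.2
    _ = _ := by
        rw [integral_prod_mul (fun θ : sphere (0 : E) 1 => F θ) fun r : Ioi (0 : ℝ) => G r,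
          Measure.integral_volumeIoiPow]

theorem abs_inner_inv_norm_smul_mul_norm {F : Type*} [NormedAddCommGroup F]
    [InnerProductSpace ℝ F] (x u : F) : |⟪‖x‖⁻¹ • x, u⟫| * ‖x‖ = |⟪x, u⟫| := by
  rcases eq_or_ne x 0 with rfl | hx
  · simp
  · rw [real_inner_smul_left, abs_mul, abs_inv, abs_norm, mul_comm, ← mul_assoc,
      mul_inv_cancel₀ (norm_ne_zero_iff.mpr hx), one_mul]

theorem integral_Ioi_pow_mul_exp_neg_sq (k : ℕ) :
    ∫ r in Ioi (0 : ℝ), r ^ k * exp (-r ^ 2) = Gamma ((k + 1) / 2) / 2 := by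
  have h := integral_rpow_mul_exp_neg_rpow two_pos
    (by linarith [k.cast_nonneg (α := ℝ)] : -1 < (k : ℝ))
  norm_num [Real.rpow_natCast] at h
  rw [h]
  ring

theorem integral_exp_neg_sq : ∫ t : ℝ, exp (-t ^ 2) = √π := by
  simpa using integral_gaussian 1

theorem integral_abs_mul_exp_neg_sq : ∫ t : ℝ, |t| * exp (-t ^ 2) = 1 := by
  have h := integral_comp_abs (f := fun t => t * exp (-t ^ 2))
  simp only [sq_abs] at h
  have h1 := integral_Ioi_pow_mul_exp_neg_sq 1
  norm_num at h1
  rw [h, h1]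
  norm_num

namespace EuclideanSpace

variable {n : ℕ}

local notation "E" => EuclideanSpace ℝ (Fin (n + 1))

theorem integral_comp_zero_mul_exp_neg_sq_norm (w : ℝ → ℝ) :
    ∫ y : E, w (y 0) * exp (-‖y‖ ^ 2) = (∫ t, w t * exp (-t ^ 2)) * √π ^ n := by
  rw [← (volume_preserving_symm_measurableEquiv_toLp _).symm.integral_comp']
  have hprod : ∀ z : Fin (n + 1) → ℝ,
      w ((MeasurableEquiv.toLp 2 _).symm.symm z 0) *
        exp (-‖(MeasurableEquiv.toLp 2 _).symm.symm z‖ ^ 2) =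
      ∏ i, (if i = 0 then w (z i) else 1) * exp (-z i ^ 2) := by
    intro z
    rw [Finset.prod_mul_distrib, Finset.prod_ite_eq' Finset.univ 0 fun i => w (z i)]
    simp [real_norm_sq_eq, ← Real.exp_sum]
  simp_rw [hprod]
  rw [integral_fintype_prod_volume_eq_prod fun i t => (if i = 0 then w t else 1) * exp (-t ^ 2),
    Fin.prod_univ_succ]
  simp [Fin.succ_ne_zero, integral_exp_neg_sq]

theorem integral_abs_inner_mul_exp_neg_sq_norm {u : E} (hu : ‖u‖ = 1) :
    ∫ x, |⟪x, u⟫| * exp (-‖x‖ ^ 2) = √π ^ n := by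
  set e₀ : E := single 0 1
  set R := (ℝ ∙ (e₀ - u))ᗮ.reflection
  have hR : R e₀ = u := Submodule.reflection_sub (by simp [hu, e₀])
  rw [← R.measurePreserving.integral_comp R.toHomeomorph.measurableEmbedding]
  have hRx : ∀ x, |⟪R x, u⟫| * exp (-‖R x‖ ^ 2) = |x 0| * exp (-‖x‖ ^ 2) := by
    intro x
    rw [← hR, R.inner_map_map, R.norm_map, inner_single_right]
    simp
  simp_rw [hRx]
  rw [integral_comp_zero_mul_exp_neg_sq_norm, integral_abs_mul_exp_neg_sq, one_mul]

theorem integral_exp_neg_sq_norm : ∫ x : E, exp (-‖x‖ ^ 2) = √π ^ (n + 1) := by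
  have h := integral_comp_zero_mul_exp_neg_sq_norm (n := n) fun _ => 1
  simp only [one_mul] at h
  rw [h, integral_exp_neg_sq, pow_succ']

theorem integral_abs_inner_sphere_mul_Gamma {u : E} (hu : ‖u‖ = 1) :
    (∫ θ : sphere (0 : E) 1, |⟪(θ : E), u⟫| ∂volume.toSphere) * (Gamma (n / 2 + 1) / 2) =
      √π ^ n := by
  have h := integral_sphere_mul_fun_norm_addHaar volume (fun x : E => |⟪x, u⟫|)
    fun r => r * exp (-r ^ 2)
  simp_rw [← mul_assoc, abs_inner_inv_norm_smul_mul_norm, finrank_euclideanSpace_fin,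
    Nat.add_sub_cancel, ← pow_succ, integral_Ioi_pow_mul_exp_neg_sq,
    integral_abs_inner_mul_exp_neg_sq_norm hu] at h
  rw [h, show ((↑(n + 1) : ℝ) + 1) / 2 = n / 2 + 1 by push_cast; ring]

theorem toSphere_real_univ_mul_Gamma :
    (volume : Measure E).toSphere.real univ * (Gamma (n / 2 + 1 / 2) / 2) = √π ^ (n + 1) := by
  have h := integral_sphere_mul_fun_norm_addHaar volume (fun _ : E => (1 : ℝ))
    fun r => exp (-r ^ 2)
  simp_rw [one_mul, finrank_euclideanSpace_fin, Nat.add_sub_cancel,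
    integral_Ioi_pow_mul_exp_neg_sq, integral_const, smul_eq_mul, mul_one,
    integral_exp_neg_sq_norm] at h
  rw [h, show ((n : ℝ) + 1) / 2 = n / 2 + 1 / 2 by ring]

theorem average_abs_inner_sphere (hn : 1 ≤ n) {u : E} (hu : ‖u‖ = 1) :
    ⨍ θ : sphere (0 : E) 1, |⟪(θ : E), u⟫| ∂volume.toSphere =
      2 / (n * realBeta (n / 2) (1 / 2)) := by
  have hJ := integral_abs_inner_sphere_mul_Gamma hu
  have hM := toSphere_real_univ_mul_Gamma (n := n)
  rw [Gamma_add_one (by positivity)] at hJ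
  rw [average_eq, smul_eq_mul]
  set J := ∫ θ : sphere (0 : E) 1, |⟪(θ : E), u⟫| ∂volume.toSphere
  set M := (volume : Measure E).toSphere.real univ
  have hΓ : 0 < Gamma (n / 2) := Gamma_pos_of_pos (by positivity)
  have hΓ' : 0 < Gamma (n / 2 + 1 / 2) := Gamma_pos_of_pos (by positivity)
  have hJ' : J = 4 * √π ^ n / (n * Gamma (n / 2)) := by
    rw [eq_div_iff (by positivity)]
    linear_combination 4 * hJ
  have hM' : M = 2 * √π ^ (n + 1) / Gamma (n / 2 + 1 / 2) := by
    rw [eq_div_iff hΓ'.ne']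
    linear_combination 2 * hM
  rw [hJ', hM', realBeta, Gamma_one_half_eq, pow_succ]
  field_simp
  ring

theorem exists_norm_eq_one_card_mul_le_sum_abs_inner (hn : 1 ≤ n) {ι : Type*} (s : Finset ι)
    (F : ι → E) (hF : ∀ i ∈ s, ‖F i‖ = 1) :
    ∃ θ : E, ‖θ‖ = 1 ∧ s.card * (2 / (n * realBeta (n / 2) (1 / 2))) ≤ ∑ i ∈ s, |⟪θ, F i⟫| := by
  have hint : ∀ i, Integrable (fun θ : sphere (0 : E) 1 => |⟪(θ : E), F i⟫|) volume.toSphere :=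
    fun i => (by fun_prop : Continuous _).integrable_of_hasCompactSupport
      (HasCompactSupport.of_compactSpace _)
  obtain ⟨θ, hθ⟩ := exists_average_le (Measure.toSphere_ne_zero volume)
    (integrable_finsetSum s fun i _ => hint i)
  refine ⟨θ, norm_eq_of_mem_sphere θ, ?_⟩
  calc (s.card : ℝ) * (2 / (n * realBeta (n / 2) (1 / 2)))
      = ∑ i ∈ s, ⨍ θ : sphere (0 : E) 1, |⟪(θ : E), F i⟫| ∂volume.toSphere := by
        rw [Finset.sum_congr rfl fun i hi => average_abs_inner_sphere hn (hF i hi),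
          Finset.sum_const, nsmul_eq_mul]
    _ = _ := by simp_rw [average_eq, integral_finsetSum s fun i _ => hint i, Finset.smul_sum]
    _ ≤ _ := hθ

end EuclideanSpace

end Sphere

open Finset

theorem Finset.exists_subset_sum_abs_le_two_mul_abs_sub_sum {ι : Type*} (s : Finset ι)
    (x : ι → ℝ) (c : ℝ) : ∃ t ⊆ s, ∑ i ∈ s, |x i| ≤ 2 * |c - ∑ i ∈ t, x i| := by
  classical
  set P := s.filter (fun i => 0 ≤ x i)
  set N := s.filter (fun i => ¬ 0 ≤ x i)
  have hsplit : ∑ i ∈ s, |x i| = (c - ∑ i ∈ N, x i) - (c - ∑ i ∈ P, x i) := by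
    rw [← sum_filter_add_sum_filter_not s (fun i => 0 ≤ x i),
      sum_congr rfl fun i hi => abs_of_nonneg (mem_filter.mp hi).2,
      sum_congr rfl fun i hi => abs_of_neg (not_le.mp (mem_filter.mp hi).2), sum_neg_distrib]
    ring
  rcases le_total |c - ∑ i ∈ P, x i| |c - ∑ i ∈ N, x i| with h | h
  · refine ⟨N, filter_subset _ _, ?_⟩
    rw [hsplit]
    linarith [le_abs_self (c - ∑ i ∈ N, x i), neg_abs_le (c - ∑ i ∈ P, x i)]
  · refine ⟨P, filter_subset _ _, ?_⟩
    rw [hsplit]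
    linarith [le_abs_self (c - ∑ i ∈ N, x i), neg_abs_le (c - ∑ i ∈ P, x i)]

namespace SimpleGraph

variable {V : Type*} [Fintype V] {G : SimpleGraph V} [DecidableRel G.Adj]

theorem incidenceFinset_eq_singleton_of_degree_eq_one [DecidableEq V] {v w : V}
    (hv : G.degree v = 1) (hvw : G.Adj v w) : G.incidenceFinset v = {s(v, w)} :=
  (eq_of_subset_of_card_le (singleton_subset_iff.mpr ((G.mem_incidenceFinset _ _).mpr
    (G.mk'_mem_incidenceSet_left_iff.mpr hvw)))
    (by rw [card_incidenceFinset_eq_degree, hv, card_singleton])).symm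

theorem Connected.eq_or_eq_of_adj_of_degree_eq_one (hG : G.Connected) {v w : V}
    (hv : G.degree v = 1) (hw : G.degree w = 1) (hvw : G.Adj v w) (x : V) :
    x = v ∨ x = w := by
  have key : ∀ {a b : V} (p : G.Walk a b), (a = v ∨ a = w) → b = v ∨ b = w := by
    intro a b p
    induction p with
    | nil => exact id
    | cons hab _ ih =>
      rintro (rfl | rfl)
      · exact ih (Or.inr ((degree_eq_one_iff_existsUnique_adj.mp hv).unique hab hvw))
      · exact ih (Or.inl ((degree_eq_one_iff_existsUnique_adj.mp hw).unique hab hvw.symm))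
  exact key (hG.preconnected v x).some (Or.inl rfl)

theorem Connected.induce_compl_connected_of_degree_eq_one (hG : G.Connected) {s : Set V}
    (hs : ∀ v ∈ s, G.degree v = 1) (hne : sᶜ.Nonempty) :
    ((⊤ : G.Subgraph).induce sᶜ).Connected := by
  have := hne.to_subtype
  refine connected_induce_iff.mp (Connected.mk (hG.preconnected.induce_of_degree_eq_one
    fun v hv => ?_))
  obtain ⟨w, -, hw⟩ := degree_eq_one_iff_existsUnique_adj.mp (hs v (not_not.mp hv))
  exact fun a ha b hb => (hw a ha).trans (hw b hb).symm

theorem finsum_edgeSet_induce_compl_add_sum_incidenceFinset [DecidableEq V]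
    {M : Type*} [AddCommMonoid M] (s : Finset V) (hs : ∀ v ∈ s, ∀ w ∈ s, ¬ G.Adj v w)
    (g : Sym2 V → M) :
    ∑ᶠ e ∈ ((⊤ : G.Subgraph).induce (↑s)ᶜ).edgeSet, g e
      + ∑ v ∈ s, ∑ e ∈ G.incidenceFinset v, g e = ∑ e ∈ G.edgeFinset, g e := by
  have hS : ((⊤ : G.Subgraph).induce (↑s)ᶜ).edgeSet =
      ↑(G.edgeFinset.filter fun e => ∀ v ∈ e, v ∉ s) := by
    ext e
    induction e with
    | _ x y => simp [and_comm, and_assoc]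
  have hB : G.edgeFinset.filter (fun e => ¬ ∀ v ∈ e, v ∉ s) =
      s.biUnion fun v => G.incidenceFinset v := by
    ext e
    simp only [mem_filter, mem_edgeFinset, not_forall, not_not, exists_prop, mem_biUnion,
      mem_incidenceFinset, incidenceSet, Set.mem_ofPred_eq]
    tauto
  have hdisj : (s : Set V).PairwiseDisjoint fun v => G.incidenceFinset v := by
    intro v hv w hw hvw
    rw [Function.onFun, Finset.disjoint_left]
    intro e hev hew
    rw [mem_incidenceFinset] at hev hew
    exact hs v hv w hw (G.adj_of_mem_incidenceSet hvw hev hew)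
  rw [hS, finsum_mem_coe_finset, ← sum_biUnion hdisj, ← hB, sum_filter_add_sum_filter_not]

theorem Connected.exists_connected_sum_abs_sum_incidenceFinset_le [DecidableEq V]
    (hG : G.Connected) (g : Sym2 V → ℝ) :
    ∃ S : G.Subgraph, S.Connected ∧
      ∑ v ∈ univ.filter (G.degree · = 1), |∑ e ∈ G.incidenceFinset v, g e| ≤
        2 * |∑ᶠ e ∈ S.edgeSet, g e| := by
  by_cases h_adj_leaves : ∃ v w, G.degree v = 1 ∧ G.degree w = 1 ∧ G.Adj v w
  · obtain ⟨v, w, hv, hw, hvw⟩ := h_adj_leaves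
    refine ⟨G.subgraphOfAdj hvw, Subgraph.subgraphOfAdj_connected hvw, ?_⟩
    have hleaves : univ.filter (G.degree · = 1) ⊆ {v, w} := fun x _ => by
      simpa using hG.eq_or_eq_of_adj_of_degree_eq_one hv hw hvw x
    calc _ ≤ ∑ x ∈ {v, w}, |∑ e ∈ G.incidenceFinset x, g e| :=
          sum_le_sum_of_subset_of_nonneg hleaves fun _ _ _ => abs_nonneg _
      _ = 2 * |∑ᶠ e ∈ (G.subgraphOfAdj hvw).edgeSet, g e| := by
        rw [sum_pair hvw.ne, incidenceFinset_eq_singleton_of_degree_eq_one hv hvw,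
          incidenceFinset_eq_singleton_of_degree_eq_one hw hvw.symm, edgeSet_subgraphOfAdj,
          finsum_mem_singleton, sum_singleton, sum_singleton, Sym2.eq_swap (a := w)]
        ring
  · push Not at h_adj_leaves
    obtain ⟨A, hA_leaves, hA⟩ :=
      (univ.filter (G.degree · = 1)).exists_subset_sum_abs_le_two_mul_abs_sub_sum
        (fun v => ∑ e ∈ G.incidenceFinset v, g e) (∑ e ∈ G.edgeFinset, g e)
    have hA_leaf : ∀ v ∈ A, G.degree v = 1 := fun v hv => (mem_filter.mp (hA_leaves hv)).2
    have hA_compl : (↑A : Set V)ᶜ.Nonempty := by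
      rw [Set.nonempty_compl]
      intro hA_univ
      have hA_all : ∀ x, G.degree x = 1 := fun x =>
        hA_leaf x (Finset.mem_coe.mp (hA_univ ▸ Set.mem_univ x))
      obtain ⟨v⟩ := hG.nonempty
      obtain ⟨w, hvw, -⟩ := degree_eq_one_iff_existsUnique_adj.mp (hA_all v)
      exact h_adj_leaves v w (hA_all v) (hA_all w) hvw
    refine ⟨_, hG.induce_compl_connected_of_degree_eq_one hA_leaf hA_compl, ?_⟩
    rwa [eq_sub_of_add_eq (finsum_edgeSet_induce_compl_add_sum_incidenceFinset A
      (fun v hv w hw => h_adj_leaves v w (hA_leaf v hv) (hA_leaf w hw)) g)]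

end SimpleGraph

/-- **High-dimensional discrepancy of subtrees, lower bound.**
For every `d ≥ 1` and every finite tree `T` with `ℓ` leaves, every colouring
`f : E(T) → S^d ⊂ ℝ^{d+1}` admits a subtree `S` (connected subgraph) with
`‖∑_{e ∈ E(S)} f e‖ ≥ ℓ / (d·B(d/2, 1/2))`. -/
theorem highdim_discrepancy_lower_bound
    {V : Type*} [Fintype V] (T : SimpleGraph V) [DecidableRel T.Adj]
    (hT : T.IsTree) (d : ℕ) (hd : 1 ≤ d) (ℓ : ℕ)
    (hℓ : ℓ = ({v : V | T.degree v = 1} : Set V).ncard)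
    (f : Sym2 V → Metric.sphere (0 : EuclideanSpace ℝ (Fin (d + 1))) 1) :
    ∃ S : T.Subgraph, S.Connected ∧
      (ℓ : ℝ) / (d * realBeta ((d : ℝ) / 2) (1 / 2)) ≤
        ‖∑ᶠ e ∈ S.edgeSet, (f e : EuclideanSpace ℝ (Fin (d + 1)))‖ := by
  classical
  set leaves := univ.filter (T.degree · = 1)
  have hℓ_leaves : ℓ = leaves.card := by
    rw [hℓ, ← Set.ncard_coe_finset, coe_filter]
    simp
  have hunit : ∀ v ∈ leaves,
      ‖∑ e ∈ T.incidenceFinset v, (f e : EuclideanSpace ℝ (Fin (d + 1)))‖ = 1 := by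
    intro v hv
    have hv1 := (mem_filter.mp hv).2
    obtain ⟨w, hvw, -⟩ := degree_eq_one_iff_existsUnique_adj.mp hv1
    rw [incidenceFinset_eq_singleton_of_degree_eq_one hv1 hvw, sum_singleton]
    exact norm_eq_of_mem_sphere _
  obtain ⟨θ, hθ, hθ_leaves⟩ :=
    EuclideanSpace.exists_norm_eq_one_card_mul_le_sum_abs_inner hd leaves _ hunit
  obtain ⟨S, hS, hS_leaves⟩ := hT.connected.exists_connected_sum_abs_sum_incidenceFinset_le
    fun e => ⟪θ, (f e : EuclideanSpace ℝ (Fin (d + 1)))⟫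
  simp_rw [← inner_sum] at hS_leaves
  have hfinsum : ⟪θ, ∑ᶠ e ∈ S.edgeSet, (f e : EuclideanSpace ℝ (Fin (d + 1)))⟫ =
      ∑ᶠ e ∈ S.edgeSet, ⟪θ, (f e : EuclideanSpace ℝ (Fin (d + 1)))⟫ :=
    (innerₛₗ ℝ θ).toAddMonoidHom.map_finsum_mem _ (Set.toFinite _)
  refine ⟨S, hS, ?_⟩
  calc (ℓ : ℝ) / (d * realBeta ((d : ℝ) / 2) (1 / 2))
      = leaves.card * (2 / (d * realBeta ((d : ℝ) / 2) (1 / 2))) / 2 := by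
        rw [hℓ_leaves]
        ring
    _ ≤ |⟪θ, ∑ᶠ e ∈ S.edgeSet, (f e : EuclideanSpace ℝ (Fin (d + 1)))⟫| := by
        rw [hfinsum]
        linarith
    _ ≤ _ := by simpa [hθ] using abs_real_inner_le_norm θ _
end

section
/- For every finite tree T with ℓ leaves, the 1-dimensional (complex) discrepancy of the family of all subtrees of T satisfies D^1(T,𝒯) ≥ ℓ/π; that is, for every colouring f : E(T) → S^1 (unit circle in ℝ²) there exists a subtree S of T with ‖Σ_{e∈E(S)} f(e)‖ ≥ ℓ/π. -/
/-!
For a unit vector `x ∈ ℝ²`, `|⟪x, u⟫|` averages to `2/π` over the unit circle, so there is a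
direction `u` with `∑ |⟪f e_v, u⟫| ≥ 2ℓ/π`, the sum running over the edges `e_v` at the leaves `v`.
Splitting the leaves by the sign of `⟪f e_v, u⟫` gives a signed sum of leaf colours of norm at
least `2ℓ/π`. If some vertex has degree at least two, no two leaves are adjacent, so `T` minus all
negative (resp. all positive) leaves is a subtree, and the colour sums of these two subtrees differ
by exactly that signed sum: one of them has norm at least `ℓ/π`. Otherwise `T` has at most
two vertices, and a single edge or vertex will do.
-/

open SimpleGraph Finset Real RealInnerProductSpace MeasureTheory

noncomputable def unitVec (θ : ℝ) : EuclideanSpace ℝ (Fin 2) := !₂[cos θ, sin θ]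

lemma inner_unitVec (x : EuclideanSpace ℝ (Fin 2)) (θ : ℝ) :
    ⟪x, unitVec θ⟫ = x 0 * cos θ + x 1 * sin θ := by
  simp [unitVec, PiLp.inner_apply, Fin.sum_univ_two, mul_comm]

lemma norm_unitVec (θ : ℝ) : ‖unitVec θ‖ = 1 := by
  simp [unitVec, EuclideanSpace.norm_eq, Fin.sum_univ_two]

lemma exists_unitVec_eq {x : EuclideanSpace ℝ (Fin 2)} (hx : ‖x‖ = 1) : ∃ α, unitVec α = x := by
  set z : ℂ := ⟨x 0, x 1⟩
  have hz : ‖z‖ = 1 := by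
    rw [← hx, Complex.norm_eq_sqrt_sq_add_sq, EuclideanSpace.norm_eq, Fin.sum_univ_two]
    simp [z]
  refine ⟨z.arg, ?_⟩
  ext i
  fin_cases i
  · simp [unitVec, Complex.cos_arg (norm_ne_zero_iff.1 (hz.trans_ne one_ne_zero)), hz, z]
  · simp [unitVec, Complex.sin_arg, hz, z]

lemma integral_abs_cos_sub (α : ℝ) : ∫ θ in 0..2 * π, |cos (θ - α)| = 4 := by
  have hper : Function.Periodic (fun θ => |cos θ|) π := fun θ => by simp [cos_add_pi]
  have hint : ∀ a b, IntervalIntegrable (fun θ => |cos θ|) volume a b :=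
    fun a b => (continuous_abs.comp continuous_cos).intervalIntegrable a b
  have hcos : ∫ θ in -(π / 2)..π / 2, |cos θ| = 2 := by
    rw [intervalIntegral.integral_congr (g := cos), integral_cos]
    · simp only [sin_pi_div_two, sin_neg, sub_neg_eq_add]; norm_num
    · intro θ hθ
      rw [Set.uIcc_of_le (by linarith [pi_pos])] at hθ
      exact abs_of_nonneg (cos_nonneg_of_mem_Icc hθ)
  rw [intervalIntegral.integral_comp_sub_right (fun θ => |cos θ|), zero_sub,
    show 2 * π - α = -α + (2 : ℤ) • π by simp; ring, hper.intervalIntegral_add_zsmul_eq 2 _ hint,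
    hper.intervalIntegral_add_eq _ (-(π / 2)), show -(π / 2) + π = π / 2 by ring, hcos]
  norm_num

lemma integral_abs_inner_unitVec {x : EuclideanSpace ℝ (Fin 2)} (hx : ‖x‖ = 1) :
    ∫ θ in 0..2 * π, |⟪x, unitVec θ⟫| = 4 := by
  obtain ⟨α, rfl⟩ := exists_unitVec_eq hx
  simp_rw [inner_unitVec]
  simpa [unitVec, cos_sub, mul_comm] using integral_abs_cos_sub α

lemma exists_le_sum_abs_inner_unitVec {ι : Type*} (s : Finset ι)
    {x : ι → EuclideanSpace ℝ (Fin 2)} (hx : ∀ i ∈ s, ‖x i‖ = 1) :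
    ∃ θ, 2 * #s / π ≤ ∑ i ∈ s, |⟪x i, unitVec θ⟫| := by
  have hcont : Continuous fun θ => ∑ i ∈ s, |⟪x i, unitVec θ⟫| := by
    simp_rw [inner_unitVec]; fun_prop
  have hint : ∫ θ in 0..2 * π, ∑ i ∈ s, |⟪x i, unitVec θ⟫| = 4 * #s := by
    rw [intervalIntegral.integral_finsetSum,
      sum_congr rfl fun i hi => integral_abs_inner_unitVec (hx i hi)]
    · simp [mul_comm]
    · intro i _
      apply Continuous.intervalIntegrable
      simp_rw [inner_unitVec]; fun_prop
  obtain ⟨θ, -, hθ⟩ := exists_setAverage_le (μ := volume) (s := Set.uIoc 0 (2 * π))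
    (by simp [pi_pos.ne']) (by simp [ENNReal.mul_eq_top])
    (intervalIntegrable_iff.1 (hcont.intervalIntegrable 0 (2 * π)))
  refine ⟨θ, le_of_eq_of_le ?_ hθ⟩
  rw [interval_average_eq, hint, smul_eq_mul, sub_zero]
  field_simp
  ring

lemma exists_subset_le_norm_sum_sub_sum {ι : Type*} [DecidableEq ι] (s : Finset ι)
    {x : ι → EuclideanSpace ℝ (Fin 2)} (hx : ∀ i ∈ s, ‖x i‖ = 1) :
    ∃ P ⊆ s, 2 * #s / π ≤ ‖∑ i ∈ P, x i - ∑ i ∈ s \ P, x i‖ := by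
  obtain ⟨θ, hθ⟩ := exists_le_sum_abs_inner_unitVec s hx
  set P := {i ∈ s | 0 ≤ ⟪x i, unitVec θ⟫}
  have hsum : ∑ i ∈ s, |⟪x i, unitVec θ⟫| = ⟪∑ i ∈ P, x i - ∑ i ∈ s \ P, x i, unitVec θ⟫ := by
    rw [inner_sub_left, sum_inner, sum_inner, ← sum_filter_add_sum_filter_not s
      (fun i => 0 ≤ ⟪x i, unitVec θ⟫), ← filter_not, ← sub_neg_eq_add, ← sum_neg_distrib]
    congr 1 <;> refine sum_congr rfl fun i hi => ?_ <;> rw [mem_filter] at hi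
    · exact abs_of_nonneg hi.2
    · rw [abs_of_neg (not_le.1 hi.2), neg_neg]
  refine ⟨P, filter_subset _ _, hθ.trans ?_⟩
  rw [hsum]
  simpa [norm_unitVec] using real_inner_le_norm (∑ i ∈ P, x i - ∑ i ∈ s \ P, x i) (unitVec θ)

namespace SimpleGraph

variable {V : Type*} [Fintype V] (G : SimpleGraph V) [DecidableRel G.Adj]

def leafFinset : Finset V := {v | G.degree v = 1}

variable {G}

lemma coe_leafFinset : (G.leafFinset : Set V) = {v | G.degree v = 1} := by
  simp [leafFinset]

lemma neighborSet_subsingleton_of_degree_eq_one {v : V} (hv : G.degree v = 1) :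
    (G.neighborSet v).Subsingleton := fun _ ha _ hb =>
  (degree_eq_one_iff_existsUnique_adj.1 hv).unique ha hb

lemma Preconnected.not_adj_of_degree_eq_one (hG : G.Preconnected) {r u v : V}
    (hr : 2 ≤ G.degree r) (hu : G.degree u = 1) (hv : G.degree v = 1) : ¬G.Adj u v := by
  intro huv
  obtain ⟨p, hp⟩ := hG.exists_isPath r u
  have hpn : ¬p.Nil := Walk.not_nil_of_ne (by rintro rfl; omega)
  have hpen : p.penultimate = v := neighborSet_subsingleton_of_degree_eq_one hu
    (p.adj_penultimate hpn).symm huv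
  refine hp.isTrail.not_mem_support_of_subsingleton_neighborSet (x := v) (by rintro rfl; omega)
    huv.ne.symm (neighborSet_subsingleton_of_degree_eq_one hv) ?_
  exact hpen ▸ p.getVert_mem_support _

lemma Preconnected.connected_induce_compl (hG : G.Preconnected) {r : V} (hr : 2 ≤ G.degree r)
    {s : Finset V} (hs : s ⊆ G.leafFinset) : ((⊤ : G.Subgraph).induce (↑s)ᶜ).Connected := by
  have hrs : r ∉ s := fun h => by
    have := mem_filter.1 (hs h)
    omega
  rw [← connected_induce_iff, connected_iff]
  refine ⟨hG.induce_of_degree_eq_one fun v hv => ?_, ⟨r, hrs⟩⟩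
  exact neighborSet_subsingleton_of_degree_eq_one (mem_filter.1 (hs (by simpa using hv))).2

lemma finsum_edgeSet_induce_compl [DecidableEq V] {M : Type*} [AddCommGroup M] {s : Finset V}
    (hs : ∀ u ∈ s, ∀ v ∈ s, ¬G.Adj u v) (g : Sym2 V → M) :
    ∑ᶠ e ∈ ((⊤ : G.Subgraph).induce (↑s)ᶜ).edgeSet, g e
      = ∑ e ∈ G.edgeFinset, g e - ∑ v ∈ s, ∑ e ∈ G.incidenceFinset v, g e := by
  have hedge : ((⊤ : G.Subgraph).induce (↑s)ᶜ).edgeSet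
      = ↑{e ∈ G.edgeFinset | ¬∃ v ∈ s, v ∈ e} := by
    ext e
    induction e using Sym2.ind with
    | _ a b =>
      simp only [Subgraph.mem_edgeSet, Subgraph.induce_adj, Subgraph.top_adj, Set.mem_compl_iff,
        SetLike.mem_coe, coe_filter, mem_edgeFinset, Set.mem_ofPred_eq, mem_edgeSet, Sym2.mem_iff]
      grind
  have hinc : {e ∈ G.edgeFinset | ∃ v ∈ s, v ∈ e} = s.biUnion fun v => G.incidenceFinset v := by
    ext e
    induction e using Sym2.ind with
    | _ a b =>
      simp only [mem_filter, mem_edgeFinset, mem_edgeSet, Sym2.mem_iff, mem_biUnion,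
        mem_incidenceFinset, incidenceSet, Set.mem_ofPred_eq]
      grind
  have hdisj : (s : Set V).PairwiseDisjoint fun v => G.incidenceFinset v := by
    intro u hu v hv huv
    rw [Function.onFun, Finset.disjoint_left]
    intro e heu hev
    simp only [mem_incidenceFinset] at heu hev
    exact hs u hu v hv (G.adj_of_mem_incidenceSet huv heu hev)
  rw [hedge, finsum_mem_coe_finset, ← sum_filter_add_sum_filter_not G.edgeFinset
    (fun e => ∃ v ∈ s, v ∈ e), hinc, sum_biUnion hdisj, add_sub_cancel_left]

theorem Preconnected.exists_connected_card_leafFinset_div_pi_le_norm (hG : G.Preconnected)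
    {r : V} (hr : 2 ≤ G.degree r) {f : Sym2 V → EuclideanSpace ℝ (Fin 2)} (hf : ∀ e, ‖f e‖ = 1) :
    ∃ S : G.Subgraph, S.Connected ∧ #G.leafFinset / π ≤ ‖∑ᶠ e ∈ S.edgeSet, f e‖ := by
  classical
  set L := G.leafFinset
  -- at a leaf, `x` is the colour of its unique edge
  set x : V → EuclideanSpace ℝ (Fin 2) := fun v => ∑ e ∈ G.incidenceFinset v, f e
  have hx : ∀ v ∈ L, ‖x v‖ = 1 := by
    intro v hv
    obtain ⟨e, he⟩ :=
      card_eq_one.1 ((G.card_incidenceFinset_eq_degree v).trans (mem_filter.1 hv).2)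
    simp [x, he, hf]
  have hindep : ∀ Q ⊆ L, ∀ u ∈ Q, ∀ v ∈ Q, ¬G.Adj u v := fun Q hQ u hu v hv =>
    hG.not_adj_of_degree_eq_one hr (mem_filter.1 (hQ hu)).2 (mem_filter.1 (hQ hv)).2
  obtain ⟨P, hPL, hP⟩ := exists_subset_le_norm_sum_sub_sum L hx
  have hA := finsum_edgeSet_induce_compl (hindep (L \ P) sdiff_subset) f
  have hB := finsum_edgeSet_induce_compl (hindep P hPL) f
  set A := ∑ᶠ e ∈ ((⊤ : G.Subgraph).induce (↑(L \ P))ᶜ).edgeSet, f e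
  set B := ∑ᶠ e ∈ ((⊤ : G.Subgraph).induce (↑P)ᶜ).edgeSet, f e
  have hAB : A - B = ∑ v ∈ P, x v - ∑ v ∈ L \ P, x v := by rw [hA, hB]; abel
  rcases le_or_gt (#L / π) ‖A‖ with hLA | hLA
  · exact ⟨_, hG.connected_induce_compl hr sdiff_subset, hLA⟩
  · refine ⟨_, hG.connected_induce_compl hr hPL, show #L / π ≤ ‖B‖ from ?_⟩
    have := norm_sub_le A B
    rw [hAB] at this
    rw [mul_div_assoc] at hP
    linarith

theorem exists_connected_card_leafFinset_div_pi_le_norm_of_card_le_three [Nonempty V]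
    {E : Type*} [SeminormedAddCommGroup E] (hL : #G.leafFinset ≤ 3) {f : Sym2 V → E}
    (hf : ∀ e, ‖f e‖ = 1) :
    ∃ S : G.Subgraph, S.Connected ∧ #G.leafFinset / π ≤ ‖∑ᶠ e ∈ S.edgeSet, f e‖ := by
  rcases (#G.leafFinset).eq_zero_or_pos with h0 | hpos
  · obtain ⟨v⟩ := ‹Nonempty V›
    exact ⟨G.singletonSubgraph v, Subgraph.singletonSubgraph_connected, by simp [h0]⟩
  · obtain ⟨v, hv⟩ := card_pos.1 hpos
    obtain ⟨w, hvw⟩ := (G.degree_pos_iff_exists_adj v).1 ((mem_filter.1 hv).2 ▸ one_pos)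
    refine ⟨G.subgraphOfAdj hvw, Subgraph.subgraphOfAdj_connected hvw, ?_⟩
    rw [edgeSet_subgraphOfAdj, finsum_mem_singleton, hf, div_le_one pi_pos]
    have : (#G.leafFinset : ℝ) ≤ 3 := by exact_mod_cast hL
    linarith [pi_gt_three]

lemma IsTree.card_le_two_of_forall_degree_le_one (hT : G.IsTree) (h : ∀ v, G.degree v ≤ 1) :
    Fintype.card V ≤ 2 := by
  have hE := hT.card_edgeFinset
  have hdeg := G.sum_degrees_eq_twice_card_edges
  have : ∑ v, G.degree v ≤ Fintype.card V := (sum_le_sum fun v _ => h v).trans_eq (by simp)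
  omega

end SimpleGraph

/-- **Complex (1-dimensional) discrepancy of subtrees, lower bound.**
For every finite tree `T` with `ℓ` leaves, every colouring `f : E(T) → S^1 ⊂ ℝ²` admits a
subtree `S` (connected subgraph) with `‖∑_{e ∈ E(S)} f e‖ ≥ ℓ/π`. -/
theorem complex_discrepancy_lower_bound
    {V : Type*} [Fintype V] (T : SimpleGraph V) [DecidableRel T.Adj]
    (hT : T.IsTree) (ℓ : ℕ)
    (hℓ : ℓ = ({v : V | T.degree v = 1} : Set V).ncard)
    (f : Sym2 V → Metric.sphere (0 : EuclideanSpace ℝ (Fin 2)) 1) :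
    ∃ S : T.Subgraph, S.Connected ∧
      (ℓ : ℝ) / Real.pi ≤
        ‖∑ᶠ e ∈ S.edgeSet, (f e : EuclideanSpace ℝ (Fin 2))‖ := by
  have hf : ∀ e, ‖(f e : EuclideanSpace ℝ (Fin 2))‖ = 1 := fun e => norm_eq_of_mem_sphere (f e)
  rw [hℓ, ← coe_leafFinset, Set.ncard_coe_finset]
  by_cases hr : ∃ r, 2 ≤ T.degree r
  · obtain ⟨r, hr⟩ := hr
    exact hT.connected.preconnected.exists_connected_card_leafFinset_div_pi_le_norm hr hf
  · push Not at hr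
    have := hT.connected.nonempty
    refine exists_connected_card_leafFinset_div_pi_le_norm_of_card_le_three ?_ hf
    have := hT.card_le_two_of_forall_degree_le_one fun v => Nat.lt_succ_iff.1 (hr v)
    exact (card_le_univ _).trans (by omega)
end

section
/- Fix an integer r ≥ 2. Define vectors d_ℓ ∈ ℕ^r for ℓ ≥ 2 as follows: (d₂)_j = r − ⌈(r+1−j)/2⌉ for j ∈ {1,…,r}; and for ℓ ≥ 3, d_ℓ is the increasing rearrangement of the vector α_{d_{ℓ-1}}, where for an increasing vector m, α_m is the vector with j-th coordinate m_j + r − j′ where j′ is the position of coordinate j under the sorting permutation (equivalently, since d_{ℓ-1} is increasing and 1-Lipschitz, (d_ℓ)_j = (d_{ℓ-1})_{r+1−j} + j − 1). Then for every ℓ ≥ 2, the maximum coordinate of d_ℓ equals ⌈ℓ(r−1)/2⌉. -/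
/-!
Reversing the coordinates twice is the identity, so two steps of the recursion add
`j + (r - 1 - j) = r - 1` to every coordinate: `d_{ℓ+2} = d_ℓ + (r - 1)`. Hence the maximum
grows by `r - 1` every two steps, exactly as `⌈ℓ(r-1)/2⌉` does, and it remains to check
`ℓ = 2` and `ℓ = 3`. There the maximum sits at the last coordinate, which is `r - 1` for `d₂`
and `d₂ 0 + (r - 1)` for `d₃`.
-/

theorem Finset.sup_eq_apply_of_forall_le {ι α : Type*} [SemilatticeSup α] [OrderBot α]
    {s : Finset ι} {f : ι → α} {i : ι} (hi : i ∈ s) (h : ∀ j ∈ s, f j ≤ f i) :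
    s.sup f = f i :=
  le_antisymm (Finset.sup_le h) (Finset.le_sup hi)

section ProfileVector

variable {r : ℕ} {D : ℕ → Fin r → ℕ}

theorem profile_add_two
    (hrec : ∀ ℓ : ℕ, 3 ≤ ℓ → ∀ j : Fin r, D ℓ j = D (ℓ - 1) j.rev + (j : ℕ))
    {ℓ : ℕ} (hℓ : 2 ≤ ℓ) (j : Fin r) : D (ℓ + 2) j = D ℓ j + (r - 1) := by
  rw [hrec (ℓ + 2) (by omega), hrec (ℓ + 2 - 1) (by omega), Fin.rev_rev, Fin.val_rev,
    show ℓ + 2 - 1 - 1 = ℓ by omega]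
  omega

theorem sup_profile_add_two (hr : 0 < r)
    (hrec : ∀ ℓ : ℕ, 3 ≤ ℓ → ∀ j : Fin r, D ℓ j = D (ℓ - 1) j.rev + (j : ℕ))
    {ℓ : ℕ} (hℓ : 2 ≤ ℓ) :
    Finset.univ.sup (D (ℓ + 2)) = Finset.univ.sup (D ℓ) + (r - 1) := by
  have : NeZero r := ⟨hr.ne'⟩
  rw [Finset.sup_add Finset.univ_nonempty]
  exact congrArg _ (funext (profile_add_two hrec hℓ))

theorem sup_profile_two (hr : 0 < r) (hbase : ∀ j : Fin r, D 2 j = r - (r - (j : ℕ) + 1) / 2) :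
    Finset.univ.sup (D 2) = (2 * (r - 1) + 1) / 2 := by
  rw [Finset.sup_eq_apply_of_forall_le (Finset.mem_univ ⟨r - 1, by omega⟩)
    fun j _ => by simp only [hbase]; omega, hbase, Fin.val_mk]
  omega

theorem sup_profile_three (hr : 0 < r)
    (hbase : ∀ j : Fin r, D 2 j = r - (r - (j : ℕ) + 1) / 2)
    (hrec : ∀ ℓ : ℕ, 3 ≤ ℓ → ∀ j : Fin r, D ℓ j = D (ℓ - 1) j.rev + (j : ℕ)) :
    Finset.univ.sup (D 3) = (3 * (r - 1) + 1) / 2 := by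
  have h3 (j : Fin r) : D 3 j = r - (j + 2) / 2 + j := by
    rw [hrec 3 le_rfl, hbase, Fin.val_rev]
    omega
  rw [Finset.sup_eq_apply_of_forall_le (Finset.mem_univ ⟨r - 1, by omega⟩)
    fun j _ => by simp only [h3]; omega, h3, Fin.val_mk]
  omega

end ProfileVector

/-- **Maximum coordinate of the profile vectors `d_ℓ`.**
Fix `r ≥ 2` and let `D ℓ : Fin r → ℕ` (for `ℓ ≥ 2`) be the vectors defined by
`(d₂)_j = r − ⌈(r+1−j)/2⌉` for `j ∈ {1,…,r}` (here coordinate `j : Fin r` represents the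
`(j+1)`-st entry, and `⌈(r−j)/2⌉ = (r − j + 1)/2` in natural division), together with the
recursion `(d_ℓ)_j = (d_{ℓ-1})_{r+1−j} + j − 1` for `ℓ ≥ 3` (in `Fin r` indexing,
`D ℓ j = D (ℓ-1) j.rev + j`), which is the increasing rearrangement of `α_{d_{ℓ-1}}`.
Then for every `ℓ ≥ 2` the maximum coordinate of `d_ℓ` equals
`⌈ℓ(r−1)/2⌉ = (ℓ(r−1) + 1)/2` (natural division). -/
theorem profile_vector_max (r : ℕ) (hr : 2 ≤ r) (D : ℕ → Fin r → ℕ)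
    (hbase : ∀ j : Fin r, D 2 j = r - (r - (j : ℕ) + 1) / 2)
    (hrec : ∀ ℓ : ℕ, 3 ≤ ℓ → ∀ j : Fin r, D ℓ j = D (ℓ - 1) j.rev + (j : ℕ)) :
    ∀ ℓ : ℕ, 2 ≤ ℓ → Finset.univ.sup (D ℓ) = (ℓ * (r - 1) + 1) / 2 := by
  have hr₀ : 0 < r := by omega
  intro ℓ hℓ
  obtain ⟨k, rfl⟩ := Nat.exists_eq_add_of_le' hℓ
  clear hℓ
  induction k using Nat.twoStepInduction with
  | zero => exact sup_profile_two hr₀ hbase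
  | one => exact sup_profile_three hr₀ hbase hrec
  | more k ih _ =>
    rw [sup_profile_add_two hr₀ hrec (by omega), ih]
    have : (k + 2 + 2) * (r - 1) = (k + 2) * (r - 1) + 2 * (r - 1) := by ring
    omega
end
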